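/- arXiv:2103.14353 — 9 statements merged into one kernel-verified Lean document; each statement's English description precedes it below -/
import Mathlib

section
/- Let n ∈ ℕ, n ≥ 1, let Y ∈ ℝ^{n×n} be symmetric positive semidefinite, let t : ℕ → ℕ be any sampling sequence, and let y : ℕ → ℝ^n be any signal with e = Δy the output of the associated delay operator. Then for every T ∈ ℕ, Σ_{s=0}^{T} ( y(s)ᵀ Y e(s) + (1/2)·y(s)ᵀ Y y(s) ) ≥ 0. (Input-feedforward passivity of the delay operator.) -/
/-!
Write `q v = v ⬝ᵥ Y *ᵥ v`. By symmetry of `Y` the `s`-th summand is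
`(q (e s + y s) - q (e s)) / 2`. Between sampling times `e (s + 1) = e s + y s`, and at a
sampling time `e (s + 1) = 0`, so `q (e (s + 1)) ≤ q (e s + y s)` because `q ≥ 0`. Hence the
sum dominates the telescoping sum `(q (e (T + 1)) - q (e 0)) / 2 = q (e (T + 1)) / 2 ≥ 0`.
-/

open Matrix Finset

theorem StrictMono.exists_apply_le_lt_apply_succ {t : ℕ → ℕ} (ht : StrictMono t) {s : ℕ}
    (hs : t 0 ≤ s) : ∃ k, t k ≤ s ∧ s < t (k + 1) :=
  Order.IsNormal.exists_map_le_lt_map_succ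
    ⟨ht, fun h ↦ (Order.not_isSuccLimit_of_isSuccArchimedean h).elim⟩ hs

theorem Matrix.IsSymm.dotProduct_mulVec_add_add {m R : Type*} [Fintype m] [CommRing R]
    {Y : Matrix m m R} (hY : Y.IsSymm) (u v : m → R) :
    (u + v) ⬝ᵥ (Y *ᵥ (u + v)) =
      u ⬝ᵥ (Y *ᵥ u) + 2 * (v ⬝ᵥ (Y *ᵥ u)) + v ⬝ᵥ (Y *ᵥ v) := by
  have hcomm : u ⬝ᵥ (Y *ᵥ v) = v ⬝ᵥ (Y *ᵥ u) := by
    rw [dotProduct_mulVec, ← mulVec_transpose, hY.eq, dotProduct_comm]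
  simp only [mulVec_add, dotProduct_add, add_dotProduct, hcomm]
  ring

theorem Matrix.PosSemidef.isSymm {m R : Type*} [Ring R] [PartialOrder R] [StarRing R]
    [TrivialStar R] {Y : Matrix m m R} (hY : Y.PosSemidef) : Y.IsSymm :=
  isHermitian_iff_isSymm.mp hY.isHermitian

theorem Matrix.PosSemidef.dotProduct_mulVec_self_nonneg {m R : Type*} [Fintype m] [CommRing R]
    [PartialOrder R] [StarRing R] [TrivialStar R] {Y : Matrix m m R} (hY : Y.PosSemidef)
    (v : m → R) : 0 ≤ v ⬝ᵥ (Y *ᵥ v) := by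
  simpa only [star_trivial] using hY.dotProduct_mulVec_nonneg v

/-- `e = Δ y` for the delay operator `Δ` of the sampling sequence `t`. -/
def IsDelayOutput {M : Type*} [AddCommMonoid M] (t : ℕ → ℕ) (y e : ℕ → M) : Prop :=
  ∀ k s : ℕ, t k ≤ s → s < t (k + 1) → e s = ∑ i ∈ Ico (t k) s, y i

namespace IsDelayOutput

variable {M : Type*} [AddCommMonoid M] {t : ℕ → ℕ} {y e : ℕ → M}

theorem apply_sampling_time (he : IsDelayOutput t y e) (ht : StrictMono t) (k : ℕ) :
    e (t k) = 0 := by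
  simpa using he k (t k) le_rfl (ht k.lt_succ_self)

theorem succ_eq_add_or_eq_zero (he : IsDelayOutput t y e) (ht : StrictMono t) (ht0 : t 0 = 0)
    (s : ℕ) : e (s + 1) = e s + y s ∨ e (s + 1) = 0 := by
  obtain ⟨k, hks, hsk⟩ := ht.exists_apply_le_lt_apply_succ (ht0.trans_le s.zero_le)
  rcases (Nat.add_one_le_of_lt hsk).lt_or_eq with hlt | heq
  · left
    rw [he k (s + 1) (hks.trans s.le_succ) hlt, sum_Ico_succ_top hks, he k s hks hsk]
  · right
    rw [heq, he.apply_sampling_time ht]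

end IsDelayOutput

theorem IsDelayOutput.half_dotProduct_mulVec_succ_sub_le {m R : Type*} [Fintype m] [Field R]
    [LinearOrder R] [IsStrictOrderedRing R] [StarRing R] [TrivialStar R]
    {Y : Matrix m m R} (hY : Y.PosSemidef) {t : ℕ → ℕ} {y e : ℕ → m → R}
    (he : IsDelayOutput t y e) (ht : StrictMono t) (ht0 : t 0 = 0) (s : ℕ) :
    e (s + 1) ⬝ᵥ (Y *ᵥ e (s + 1)) / 2 - e s ⬝ᵥ (Y *ᵥ e s) / 2 ≤
      y s ⬝ᵥ (Y *ᵥ e s) + (1 / 2) * (y s ⬝ᵥ (Y *ᵥ y s)) := by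
  have hle : e (s + 1) ⬝ᵥ (Y *ᵥ e (s + 1)) ≤ (e s + y s) ⬝ᵥ (Y *ᵥ (e s + y s)) := by
    rcases he.succ_eq_add_or_eq_zero ht ht0 s with h | h
    · rw [h]
    · rw [h, mulVec_zero, dotProduct_zero]
      exact hY.dotProduct_mulVec_self_nonneg _
  linarith [hY.isSymm.dotProduct_mulVec_add_add (e s) (y s)]

theorem delay_operator_input_feedforward_passive_general
    (n : ℕ) (Y : Matrix (Fin n) (Fin n) ℝ) (hY : Y.PosSemidef)
    (t : ℕ → ℕ) (ht : StrictMono t) (ht0 : t 0 = 0)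
    (y e : ℕ → Fin n → ℝ)
    (he : ∀ k s : ℕ, t k ≤ s → s < t (k + 1) →
      e s = ∑ i ∈ Finset.Ico (t k) s, y i) :
    ∀ T : ℕ, 0 ≤ ∑ s ∈ Finset.range (T + 1),
      (y s ⬝ᵥ (Y *ᵥ e s) + (1 / 2) * (y s ⬝ᵥ (Y *ᵥ y s))) := by
  intro T
  have he0 : e 0 = 0 := ht0 ▸ IsDelayOutput.apply_sampling_time he ht 0
  calc (0 : ℝ) ≤ e (T + 1) ⬝ᵥ (Y *ᵥ e (T + 1)) / 2 - e 0 ⬝ᵥ (Y *ᵥ e 0) / 2 := by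
        rw [he0, mulVec_zero, dotProduct_zero]
        linarith [hY.dotProduct_mulVec_self_nonneg (e (T + 1))]
    _ = ∑ s ∈ range (T + 1),
          (e (s + 1) ⬝ᵥ (Y *ᵥ e (s + 1)) / 2 - e s ⬝ᵥ (Y *ᵥ e s) / 2) :=
        (sum_range_sub (fun s ↦ e s ⬝ᵥ (Y *ᵥ e s) / 2) (T + 1)).symm
    _ ≤ _ := sum_le_sum fun s _ ↦
        IsDelayOutput.half_dotProduct_mulVec_succ_sub_le hY he ht ht0 s

/-- Input-feedforward passivity of the delay operator: for any symmetric positive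
semidefinite multiplier `Y`, any sampling sequence `t` (strictly increasing, `t 0 = 0`),
any signal `y` with `e = Δ y` the output of the associated delay operator
(`e s = ∑_{i = t k}^{s-1} y i` for `t k ≤ s < t (k+1)`), the passivity sum is nonnegative. -/
theorem delay_operator_input_feedforward_passive
    (n : ℕ) (hn : 1 ≤ n) (Y : Matrix (Fin n) (Fin n) ℝ) (hY : Y.PosSemidef)
    (t : ℕ → ℕ) (ht : StrictMono t) (ht0 : t 0 = 0)
    (y e : ℕ → Fin n → ℝ)
    (he : ∀ k s : ℕ, t k ≤ s → s < t (k + 1) →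
      e s = ∑ i ∈ Finset.Ico (t k) s, y i) :
    ∀ T : ℕ, 0 ≤ ∑ s ∈ Finset.range (T + 1),
      (y s ⬝ᵥ (Y *ᵥ e s) + (1 / 2) * (y s ⬝ᵥ (Y *ᵥ y s))) :=
  delay_operator_input_feedforward_passive_general n Y hY t ht ht0 y e he
end

section
/- For every real constant c < 1/2 there exist a sampling sequence t : ℕ → ℕ, a signal y : ℕ → ℝ, and T ∈ ℕ such that Σ_{s=0}^{T} ( y(s)·e(s) + c·y(s)² ) < 0, where e = Δy is the output of the delay operator associated with t. (The factor 1/2 in the input-feedforward passivity property of the delay operator is the smallest possible.) -/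
open Matrix Finset

/-- The factor `1/2` in the input-feedforward passivity property of the delay operator is
the smallest possible: for every `c < 1/2` there exist a sampling sequence `t`, a scalar
signal `y` with `e = Δ y`, and a horizon `T` such that the passivity sum with factor `c`
is negative. -/
theorem delay_operator_passivity_factor_tight :
    ∀ c : ℝ, c < 1 / 2 →
      ∃ (t : ℕ → ℕ) (y e : ℕ → ℝ) (T : ℕ),
        StrictMono t ∧ t 0 = 0 ∧
        (∀ k s : ℕ, t k ≤ s → s < t (k + 1) →
          e s = ∑ i ∈ Finset.Ico (t k) s, y i) ∧
        ∑ s ∈ Finset.range (T + 1), (y s * e s + c * (y s) ^ 2) < 0 := by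
  intro c hc
  set y : ℕ → ℝ := fun s => if s = 0 then 1 else if s = 1 then -1 else 0 with hy
  refine ⟨fun k => 2 * k, y,
    fun s => ∑ i ∈ Finset.Ico (2 * (s / 2)) s, y i, 1, ?_, rfl, ?_, ?_⟩
  · intro a b h
    dsimp only
    omega
  · intro k s h1 h2
    dsimp only at h1 h2 ⊢
    have hk : s / 2 = k := by omega
    rw [hk]
  · have h0 : (Finset.Ico (2 * (0 / 2)) 0) = ∅ := by decide
    have h1 : (Finset.Ico (2 * (1 / 2)) 1) = {0} := by decide
    simp only [Finset.sum_range_succ, Finset.sum_range_one, h0, h1,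
      Finset.sum_empty, Finset.sum_singleton, hy]
    norm_num
    linarith
end

section
/- Let n ∈ ℕ, n ≥ 1, let h̄ ∈ ℕ, h̄ ≥ 1, let t : ℕ → ℕ be a sampling sequence whose sampling intervals satisfy 1 ≤ h_k ≤ h̄ for all k, let y : ℕ → ℝ^n be any signal and e = Δy. Then for every T ∈ ℕ, Σ_{s=0}^{T} ‖e(s)‖² ≤ λmax(E_{h̄}) · Σ_{s=0}^{T} ‖y(s)‖², where ‖·‖ is the Euclidean norm. -/
open Matrix Finset

/-- The `h × h` matrix with entries `min i j` (zero-based indices). -/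
noncomputable def Emat (h : ℕ) : Matrix (Fin h) (Fin h) ℝ :=
  fun i j => (min (i : ℕ) (j : ℕ) : ℝ)

lemma Emat_isHermitian (h : ℕ) : (Emat h).IsHermitian := by
  ext i j
  simp [Emat, Matrix.conjTranspose_apply, min_comm]

/-- The largest eigenvalue of `Emat h`. -/
noncomputable def lamMax (h : ℕ) : ℝ := ⨆ i, (Emat_isHermitian h).eigenvalues i

/-!
On a sampling interval `[t k, t (k+1))` of length `l` the delay operator produces the partial
sums `S s = ∑_{i<s} x i` of the shifted signal `x i = y (t k + i)`. Counting the `s` with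
`i, j < s` gives `∑_{s<l} ‖S s‖² = ∑_{i,j<l} min (l-1-i) (l-1-j) ⟪x i, x j⟫`, the Gram form of
`E_l` evaluated at the reversed signal; diagonalising `E_l` bounds it by `λmax(E_l) ∑ ‖x i‖²`.
Padding a block with zeros up to length `h̄` only adds nonnegative terms, so `λmax(E_h̄)` serves
for every block, and summing over the blocks cut off at `T + 1` gives the claim.
-/

open scoped RealInnerProductSpace

variable {F : Type*} [NormedAddCommGroup F] [InnerProductSpace ℝ F]

theorem norm_sum_sq_eq_sum_sum_inner {ι : Type*} (s : Finset ι) (w : ι → F) :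
    ‖∑ i ∈ s, w i‖ ^ 2 = ∑ i ∈ s, ∑ j ∈ s, ⟪w i, w j⟫ := by
  simp_rw [← real_inner_self_eq_norm_sq, sum_inner, inner_sum]

section Gram

variable {ι κ : Type*} [Fintype ι] [Fintype κ] [DecidableEq κ]

theorem sum_sum_mul_diagonal_mul_transpose_mul_inner (U : Matrix ι κ ℝ) (d : κ → ℝ)
    (w : ι → F) :
    ∑ i, ∑ j, (U * diagonal d * Uᵀ : Matrix ι ι ℝ) i j * ⟪w i, w j⟫
      = ∑ k, d k * ‖∑ i, U i k • w i‖ ^ 2 := by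
  have entry : ∀ i j, (U * diagonal d * Uᵀ : Matrix ι ι ℝ) i j = ∑ k, d k * (U i k * U j k) :=
    fun i j => by
      rw [mul_apply]; simp only [mul_diagonal, transpose_apply]
      exact sum_congr rfl fun k _ => by ring
  simp_rw [entry, norm_sum_sq_eq_sum_sum_inner, real_inner_smul_left, real_inner_smul_right,
    sum_mul, mul_sum, mul_assoc]
  exact (sum_congr rfl fun i _ => sum_comm).trans sum_comm

theorem Matrix.IsHermitian.sum_sum_mul_inner_le [DecidableEq ι] {A : Matrix ι ι ℝ}
    (hA : A.IsHermitian) (w : ι → F) :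
    ∑ i, ∑ j, A i j * ⟪w i, w j⟫ ≤ (⨆ k, hA.eigenvalues k) * ∑ i, ‖w i‖ ^ 2 := by
  set U : Matrix ι ι ℝ := (hA.eigenvectorUnitary : Matrix ι ι ℝ)
  have hdiag : A = U * diagonal hA.eigenvalues * Uᵀ := by
    conv_lhs => rw [hA.spectral_theorem]
    simp [U, Unitary.conjStarAlgAut_apply, star_eq_conjTranspose]
  have hone : (1 : Matrix ι ι ℝ) = U * diagonal 1 * Uᵀ := by
    simpa [U, star_eq_conjTranspose] using (Unitary.coe_mul_star_self hA.eigenvectorUnitary).symm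
  have hnorm : ∑ i, ‖w i‖ ^ 2 = ∑ k, ‖∑ i, U i k • w i‖ ^ 2 := by
    simpa [one_apply, ite_mul, real_inner_self_eq_norm_sq] using
      (congrArg (fun M : Matrix ι ι ℝ => ∑ i, ∑ j, M i j * ⟪w i, w j⟫) hone).trans
        (sum_sum_mul_diagonal_mul_transpose_mul_inner U 1 w)
  conv_lhs => rw [hdiag, sum_sum_mul_diagonal_mul_transpose_mul_inner]
  rw [hnorm, mul_sum]
  exact sum_le_sum fun k _ => mul_le_mul_of_nonneg_right
    (le_ciSup (Set.finite_range _).bddAbove k) (sq_nonneg _)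

end Gram

theorem sum_norm_sum_filter_sq_eq {σ ι : Type*} (S : Finset σ) (I : Finset ι) (p : σ → ι → Prop)
    [∀ s i, Decidable (p s i)] (x : ι → F) :
    ∑ s ∈ S, ‖∑ i ∈ I with p s i, x i‖ ^ 2
      = ∑ i ∈ I, ∑ j ∈ I, (#{s ∈ S | p s i ∧ p s j} : ℝ) * ⟪x i, x j⟫ := by
  simp_rw [norm_sum_sq_eq_sum_sum_inner, natCast_card_filter, sum_mul, sum_filter, ite_and,
    ite_mul, one_mul, zero_mul, ite_sum_zero]
  rw [sum_comm]
  exact sum_congr rfl fun _ _ => sum_comm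

theorem sum_range_norm_sum_range_sq_le_lamMax (x : ℕ → F) (h : ℕ) :
    ∑ s ∈ range h, ‖∑ i ∈ range s, x i‖ ^ 2 ≤ lamMax h * ∑ i ∈ range h, ‖x i‖ ^ 2 := by
  have hfilter : ∀ s ∈ range h, range s = {i ∈ range h | i < s} := fun s hs => by
    ext i; simp only [mem_range, mem_filter] at hs ⊢; omega
  have hcard : ∀ i j : Fin h,
      (#{s ∈ range h | (i : ℕ) < s ∧ (j : ℕ) < s} : ℝ) = Emat h i.rev j.rev := by
    intro i j
    have hIoo : {s ∈ range h | (i : ℕ) < s ∧ (j : ℕ) < s} = Ioo (max (i : ℕ) j) h := by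
      ext s; simp only [mem_filter, mem_range, mem_Ioo]; omega
    rw [hIoo, Nat.card_Ioo, Emat, Fin.val_rev, Fin.val_rev, ← Nat.cast_min]
    congr 1; omega
  calc ∑ s ∈ range h, ‖∑ i ∈ range s, x i‖ ^ 2
      = ∑ s ∈ range h, ‖∑ i ∈ range h with i < s, x i‖ ^ 2 :=
        sum_congr rfl fun s hs => by rw [hfilter s hs]
    _ = ∑ i : Fin h, ∑ j : Fin h, Emat h i.rev j.rev * ⟪x i, x j⟫ := by
        simp_rw [sum_norm_sum_filter_sq_eq, sum_range, hcard]
    _ = ∑ i : Fin h, ∑ j : Fin h, Emat h i j * ⟪x i.rev, x j.rev⟫ :=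
        Fintype.sum_equiv Fin.revPerm _ _ fun i =>
          Fintype.sum_equiv Fin.revPerm _ _ fun j => by simp
    _ ≤ lamMax h * ∑ i : Fin h, ‖x i.rev‖ ^ 2 :=
        (Emat_isHermitian h).sum_sum_mul_inner_le fun i => x i.rev
    _ = lamMax h * ∑ i ∈ range h, ‖x i‖ ^ 2 := by
        rw [sum_range]
        exact congrArg _ (Fintype.sum_equiv Fin.revPerm _ _ fun i => by simp)

theorem sum_Ico_norm_sum_Ico_sq_le_lamMax (x : ℕ → F) {a b h : ℕ} (hab : b - a ≤ h) :
    ∑ s ∈ Ico a b, ‖∑ i ∈ Ico a s, x i‖ ^ 2 ≤ lamMax h * ∑ i ∈ Ico a b, ‖x i‖ ^ 2 := by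
  set x' : ℕ → F := fun i => if i < b - a then x (a + i) else 0
  have hx' : ∀ i < b - a, x' i = x (a + i) := fun i hi => if_pos hi
  calc ∑ s ∈ Ico a b, ‖∑ i ∈ Ico a s, x i‖ ^ 2
      = ∑ s ∈ range (b - a), ‖∑ i ∈ range s, x' i‖ ^ 2 := by
        rw [sum_Ico_eq_sum_range]
        refine sum_congr rfl fun s hs => ?_
        rw [sum_Ico_eq_sum_range, add_tsub_cancel_left]
        exact congrArg (‖·‖ ^ 2) <| sum_congr rfl fun i hi =>
          (hx' i (by simp only [mem_range] at hs hi; omega)).symm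
    _ ≤ ∑ s ∈ range h, ‖∑ i ∈ range s, x' i‖ ^ 2 :=
        sum_le_sum_of_subset_of_nonneg (range_mono hab) fun _ _ _ => sq_nonneg _
    _ ≤ lamMax h * ∑ i ∈ range h, ‖x' i‖ ^ 2 := sum_range_norm_sum_range_sq_le_lamMax x' h
    _ = lamMax h * ∑ i ∈ Ico a b, ‖x i‖ ^ 2 := by
        rw [sum_Ico_eq_sum_range, ← sum_subset (range_mono hab) fun i _ hi => ?_]
        · exact congrArg _ <| sum_congr rfl fun i hi => by rw [hx' i (mem_range.1 hi)]
        · simp [x', mem_range.not.1 hi]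

theorem Finset.sum_range_eq_sum_sum_Ico_of_monotone {M : Type*} [AddCommMonoid M] (f : ℕ → M)
    {u : ℕ → ℕ} (hu : Monotone u) (hu0 : u 0 = 0) (K : ℕ) :
    ∑ s ∈ range (u K), f s = ∑ k ∈ range K, ∑ s ∈ Ico (u k) (u (k + 1)), f s := by
  induction K with
  | zero => simp [hu0]
  | succ K ih => rw [sum_range_succ, ← ih, sum_range_add_sum_Ico _ (hu K.le_succ)]

theorem delay_operator_l2_gain_bound_general
    (n : ℕ) (hbar : ℕ)
    (t : ℕ → ℕ) (ht : StrictMono t) (ht0 : t 0 = 0)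
    (hint : ∀ k : ℕ, 1 ≤ t (k + 1) - t k ∧ t (k + 1) - t k ≤ hbar)
    (y e : ℕ → EuclideanSpace ℝ (Fin n))
    (he : ∀ k s : ℕ, t k ≤ s → s < t (k + 1) →
      e s = ∑ i ∈ Finset.Ico (t k) s, y i) :
    ∀ T : ℕ, ∑ s ∈ Finset.range (T + 1), ‖e s‖ ^ 2
      ≤ lamMax hbar * ∑ s ∈ Finset.range (T + 1), ‖y s‖ ^ 2 := by
  intro T
  set u : ℕ → ℕ := fun k => min (t k) (T + 1)
  have hu : Monotone u := fun _ _ hkl => min_le_min_right _ (ht.monotone hkl)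
  have hu0 : u 0 = 0 := by simp [u, ht0]
  have huT : u (T + 1) = T + 1 := min_eq_right ht.le_apply
  rw [← huT, sum_range_eq_sum_sum_Ico_of_monotone _ hu hu0,
    sum_range_eq_sum_sum_Ico_of_monotone _ hu hu0, mul_sum]
  refine sum_le_sum fun k _ => ?_
  have hstep : t k ≤ t (k + 1) := ht.monotone k.le_succ
  have hblock : ∀ s ∈ Ico (u k) (u (k + 1)), u k = t k ∧ s < t (k + 1) := fun s hs => by
    simp only [u, mem_Ico] at hs ⊢; omega
  calc ∑ s ∈ Ico (u k) (u (k + 1)), ‖e s‖ ^ 2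
      = ∑ s ∈ Ico (u k) (u (k + 1)), ‖∑ i ∈ Ico (u k) s, y i‖ ^ 2 :=
        sum_congr rfl fun s hs => by
          obtain ⟨hut, hst⟩ := hblock s hs
          rw [he k s (hut ▸ (mem_Ico.1 hs).1) hst, hut]
    _ ≤ _ := sum_Ico_norm_sum_Ico_sq_le_lamMax y (by have := (hint k).2; simp only [u]; omega)

/-- ℓ₂ gain bound for the delay operator: for any sampling sequence whose sampling
intervals satisfy `1 ≤ t (k+1) - t k ≤ h̄`, any signal `y` and `e = Δ y`, the truncated
energy of `e` is bounded by `λmax(E_h̄)` times that of `y`. -/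
theorem delay_operator_l2_gain_bound
    (n : ℕ) (hn : 1 ≤ n) (hbar : ℕ) (hhbar : 1 ≤ hbar)
    (t : ℕ → ℕ) (ht : StrictMono t) (ht0 : t 0 = 0)
    (hint : ∀ k : ℕ, 1 ≤ t (k + 1) - t k ∧ t (k + 1) - t k ≤ hbar)
    (y e : ℕ → EuclideanSpace ℝ (Fin n))
    (he : ∀ k s : ℕ, t k ≤ s → s < t (k + 1) →
      e s = ∑ i ∈ Finset.Ico (t k) s, y i) :
    ∀ T : ℕ, ∑ s ∈ Finset.range (T + 1), ‖e s‖ ^ 2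
      ≤ lamMax hbar * ∑ s ∈ Finset.range (T + 1), ‖y s‖ ^ 2 :=
  delay_operator_l2_gain_bound_general n hbar t ht ht0 hint y e he
end

section
/- Let n ∈ ℕ, n ≥ 1, let h̄ ∈ ℕ, h̄ ≥ 1, and let y : {0,…,h̄−1} → ℝ^n. Then Σ_{s=0}^{h̄−1} ‖ Σ_{i=0}^{s−1} y(i) ‖² ≤ λmax(E_{h̄}) · Σ_{s=0}^{h̄−1} ‖y(s)‖², where ‖·‖ is the Euclidean norm (the inner sum being 0 for s = 0). -/
/-!
With `L` the strictly lower-triangular all-ones matrix, the left-hand side is `∑ₖ ‖L yₖ‖²` over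
the coordinate sequences `yₖ`, and `(Lᵀ L) i j = #{s | max i j < s} = h̄ - 1 - max i j`, which is
`E_h̄` conjugated by the index reversal `i ↦ h̄ - 1 - i`. Each coordinate is therefore bounded by
the Rayleigh inequality `xᵀ E_h̄ x ≤ λmax(E_h̄) ‖x‖²` for the reversed sequence; the Rayleigh
inequality itself is `E_h̄ ≤ λmax(E_h̄) • 1` in the Loewner order.
-/

open Matrix Finset

open scoped MatrixOrder in
theorem Matrix.IsHermitian.dotProduct_mulVec_le_iSup_eigenvalues_mul {n : Type*} [Fintype n]
    [DecidableEq n] {A : Matrix n n ℝ} (hA : A.IsHermitian) (x : n → ℝ) :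
    x ⬝ᵥ A *ᵥ x ≤ (⨆ i, hA.eigenvalues i) * (x ⬝ᵥ x) := by
  have hle : A ≤ algebraMap ℝ (Matrix n n ℝ) (⨆ i, hA.eigenvalues i) := by
    refine le_algebraMap_of_spectrum_le ?_ hA.isSelfAdjoint
    rw [hA.spectrum_real_eq_range_eigenvalues]
    rintro _ ⟨i, rfl⟩
    exact le_ciSup (Set.finite_range _).bddAbove i
  simpa [sub_mulVec, dotProduct_sub, Algebra.algebraMap_eq_smul_one, smul_mulVec,
    dotProduct_smul, sub_nonneg] using (Matrix.le_iff.mp hle).dotProduct_mulVec_nonneg x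

theorem sum_sq_sum_Iio {α R : Type*} [Fintype α] [LinearOrder α] [LocallyFiniteOrderBot α]
    [LocallyFiniteOrderTop α] [CommSemiring R] (u : α → R) :
    ∑ s, (∑ i ∈ Iio s, u i) ^ 2 = ∑ i, ∑ j, (#(Ioi (max i j)) : R) * (u i * u j) := by
  calc ∑ s, (∑ i ∈ Iio s, u i) ^ 2
      = ∑ s, ∑ i, ∑ j, if max i j < s then u i * u j else 0 := by
        refine sum_congr rfl fun s _ => ?_
        simp only [← filter_gt_eq_Iio, sum_filter, sq, sum_mul_sum, ite_zero_mul_ite_zero,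
          max_lt_iff]
    _ = ∑ i, ∑ j, ∑ s, if max i j < s then u i * u j else 0 := by
        rw [sum_comm]
        exact sum_congr rfl fun _ _ => sum_comm
    _ = ∑ i, ∑ j, (#(Ioi (max i j)) : R) * (u i * u j) := by
        simp only [← sum_filter, filter_lt_eq_Ioi, sum_const, nsmul_eq_mul]

theorem Emat_rev_rev {h : ℕ} (i j : Fin h) : Emat h i.rev j.rev = #(Ioi (max i j)) := by
  rw [Emat, Fin.card_Ioi, ← Nat.cast_min]
  congr 1
  simp only [Fin.val_rev, Fin.coe_max]
  omega

theorem sum_sq_sum_Iio_le_lamMax_mul (h : ℕ) (u : Fin h → ℝ) :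
    ∑ s, (∑ i ∈ Iio s, u i) ^ 2 ≤ lamMax h * ∑ s, u s ^ 2 := by
  set x : Fin h → ℝ := fun i => u i.rev
  have hquad : x ⬝ᵥ Emat h *ᵥ x = ∑ s, (∑ i ∈ Iio s, u i) ^ 2 := by
    rw [sum_sq_sum_Iio]
    refine Fintype.sum_equiv Fin.revPerm _ _ fun i => ?_
    simp only [mulVec, dotProduct, mul_sum, x]
    refine Fintype.sum_equiv Fin.revPerm _ _ fun j => ?_
    simp only [Fin.revPerm_apply, ← Emat_rev_rev, Fin.rev_rev]
    ring
  have hnorm : x ⬝ᵥ x = ∑ s, u s ^ 2 :=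
    Fintype.sum_equiv Fin.revPerm _ _ fun i => by simp [x, sq]
  rw [← hquad, ← hnorm]
  exact (Emat_isHermitian h).dotProduct_mulVec_le_iSup_eigenvalues_mul x

theorem lifted_l2_gain_bound_general
    (n : ℕ) (hbar : ℕ)
    (y : Fin hbar → EuclideanSpace ℝ (Fin n)) :
    ∑ s : Fin hbar, ‖∑ i ∈ Finset.Iio s, y i‖ ^ 2
      ≤ lamMax hbar * ∑ s : Fin hbar, ‖y s‖ ^ 2 := by
  simp only [EuclideanSpace.real_norm_sq_eq, WithLp.ofLp_sum, Finset.sum_apply]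
  rw [sum_comm, sum_comm (s := univ (α := Fin hbar)) (t := univ (α := Fin n)), mul_sum]
  exact sum_le_sum fun k _ => sum_sq_sum_Iio_le_lamMax_mul hbar fun s => y s k

/-- Single-sampling-interval (lifted) form of the ℓ₂ gain bound: for any
`y : {0,…,h̄−1} → ℝⁿ`, the energy of the running partial sums is bounded by
`λmax(E_h̄)` times the energy of `y`. -/
theorem lifted_l2_gain_bound
    (n : ℕ) (hn : 1 ≤ n) (hbar : ℕ) (hhbar : 1 ≤ hbar)
    (y : Fin hbar → EuclideanSpace ℝ (Fin n)) :
    ∑ s : Fin hbar, ‖∑ i ∈ Finset.Iio s, y i‖ ^ 2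
      ≤ lamMax hbar * ∑ s : Fin hbar, ‖y s‖ ^ 2 :=
  lifted_l2_gain_bound_general n hbar y
end

section
/- Let n ∈ ℕ, n ≥ 1, and h̄ ∈ ℕ, h̄ ≥ 1. The infimum of the set of all γ ≥ 0 such that, for every sampling sequence t : ℕ → ℕ with sampling intervals h_k ≤ h̄, every signal y : ℕ → ℝ^n, and every T ∈ ℕ, Σ_{s=0}^{T} ‖(Δy)(s)‖² ≤ γ² · Σ_{s=0}^{T} ‖y(s)‖², equals sqrt( λmax(E_{h̄}) ). (The ℓ2 gain of the delay operator over all sampling patterns with intervals at most h̄ is exactly sqrt(λmax(E_{h̄})).) -/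
open Matrix Finset

/-!
On a sampling interval of length `d`, the delay operator acts as the strictly lower triangular
all-ones matrix `L`, whose Gram matrix `Lᵀ L` is `E_d` with the index order reversed. Padding with
zeros turns an interval of length `d ≤ h̄` into one of length `h̄`, so the Rayleigh bound for
`E_h̄` controls `‖Δy‖²` on every interval, coordinate by coordinate; summing over the intervals,
truncated at the horizon, gives the gain `√λmax(E_h̄)`. Conversely, periodic sampling with period
`h̄` and a signal that is, on the first interval, a reversed top eigenvector of `E_h̄` times a unit
vector attains it.
-/

namespace Matrix.IsHermitian

variable {ι : Type*} [Fintype ι] [DecidableEq ι] {A : Matrix ι ι ℝ}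

lemma eigenvectorBasis_dotProduct_mulVec (hA : A.IsHermitian) (x : ι → ℝ) (i : ι) :
    ⇑(hA.eigenvectorBasis i) ⬝ᵥ A *ᵥ x = hA.eigenvalues i * (hA.eigenvectorBasis i ⬝ᵥ x) := by
  have hsymm : Aᵀ = A := by simpa [IsHermitian, conjTranspose_eq_transpose_of_trivial] using hA
  rw [dotProduct_mulVec, ← mulVec_transpose, hsymm, hA.mulVec_eigenvectorBasis, smul_dotProduct,
    smul_eq_mul]

theorem dotProduct_mulVec_le_iSup_eigenvalues (hA : A.IsHermitian) (x : ι → ℝ) :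
    x ⬝ᵥ A *ᵥ x ≤ (⨆ i, hA.eigenvalues i) * (x ⬝ᵥ x) := by
  have parseval (u : ι → ℝ) :
      x ⬝ᵥ u = ∑ i, (hA.eigenvectorBasis i ⬝ᵥ x) * (hA.eigenvectorBasis i ⬝ᵥ u) := by
    have := hA.eigenvectorBasis.sum_inner_mul_inner (WithLp.toLp 2 u) (WithLp.toLp 2 x)
    simp only [EuclideanSpace.inner_eq_star_dotProduct, star_trivial] at this
    rw [← this]
    exact Finset.sum_congr rfl fun i _ => by rw [mul_comm, dotProduct_comm x]
  rw [parseval, parseval, Finset.mul_sum]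
  refine Finset.sum_le_sum fun i _ => ?_
  rw [eigenvectorBasis_dotProduct_mulVec, mul_left_comm]
  exact mul_le_mul_of_nonneg_right (le_ciSup (Set.finite_range _).bddAbove i)
    (mul_self_nonneg (hA.eigenvectorBasis i ⬝ᵥ x))

theorem exists_dotProduct_mulVec_eq_iSup_eigenvalues [Nonempty ι] (hA : A.IsHermitian) :
    ∃ x : ι → ℝ, x ⬝ᵥ x = 1 ∧ x ⬝ᵥ A *ᵥ x = ⨆ i, hA.eigenvalues i := by
  obtain ⟨i, hi⟩ := exists_eq_ciSup_of_finite (f := hA.eigenvalues)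
  have hunit : ⇑(hA.eigenvectorBasis i) ⬝ᵥ hA.eigenvectorBasis i = 1 := by
    simpa only [EuclideanSpace.inner_eq_star_dotProduct, star_trivial] using
      hA.eigenvectorBasis.inner_eq_one i
  exact ⟨_, hunit, by rw [eigenvectorBasis_dotProduct_mulVec, hunit, mul_one, hi]⟩

end Matrix.IsHermitian

def delayMatrix (h : ℕ) : Matrix (Fin h) (Fin h) ℝ :=
  of fun k i => if i < k then 1 else 0

lemma Fin.sum_Iio_val_eq_sum_range {M : Type*} [AddCommMonoid M] {h : ℕ} (f : ℕ → M) (k : Fin h) :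
    ∑ i ∈ Iio k, f i = ∑ i ∈ range k, f i := by
  rw [← Nat.Iio_eq_range, ← Fin.map_valEmbedding_Iio, sum_map]
  rfl

lemma delayMatrix_mulVec_apply {h : ℕ} (w : ℕ → ℝ) (k : Fin h) :
    (delayMatrix h *ᵥ fun i => w i) k = ∑ i ∈ range k, w i := by
  simp only [delayMatrix, mulVec, dotProduct, of_apply, ite_mul, one_mul, zero_mul]
  rw [← sum_filter, filter_gt_eq_Iio, Fin.sum_Iio_val_eq_sum_range]

lemma transpose_delayMatrix_mul_self (h : ℕ) :
    (delayMatrix h)ᵀ * delayMatrix h = (Emat h).submatrix Fin.rev Fin.rev := by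
  ext a b
  have hcard : #{k : Fin h | a < k ∧ b < k} = #(Ioi (max a b)) := by
    congr 1; ext k; simp
  simp only [mul_apply, transpose_apply, delayMatrix, of_apply, mul_ite, mul_one, mul_zero,
    ← ite_and, sum_boole, submatrix_apply, Emat, and_comm (a := b < _), hcard, Fin.card_Ioi,
    Fin.val_rev, ← Nat.cast_min, Fin.coe_max]
  congr 1
  omega

lemma Emat_posSemidef (h : ℕ) : (Emat h).PosSemidef := by
  have := (posSemidef_conjTranspose_mul_self (delayMatrix h)).submatrix Fin.rev
  rwa [conjTranspose_eq_transpose_of_trivial, transpose_delayMatrix_mul_self, submatrix_submatrix,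
    Fin.rev_involutive.comp_self, submatrix_id_id] at this

lemma lamMax_nonneg (h : ℕ) : 0 ≤ lamMax h :=
  Real.iSup_nonneg fun i => (Emat_posSemidef h).eigenvalues_nonneg i

lemma comp_rev_dotProduct_mulVec_comp_rev {h : ℕ} (M : Matrix (Fin h) (Fin h) ℝ) (v : Fin h → ℝ) :
    (v ∘ Fin.rev) ⬝ᵥ M *ᵥ (v ∘ Fin.rev) = v ⬝ᵥ M.submatrix Fin.rev Fin.rev *ᵥ v := by
  change _ = v ⬝ᵥ M.submatrix Fin.rev Fin.revPerm *ᵥ v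
  rw [submatrix_mulVec_equiv]
  exact (dotProduct_comp_equiv_symm (e := Fin.revPerm) ..).symm

lemma sum_sq_sum_range_eq_dotProduct_Emat_mulVec (h : ℕ) (w : ℕ → ℝ) :
    ∑ j ∈ range h, (∑ i ∈ range j, w i) ^ 2
      = (fun a : Fin h => w a.rev) ⬝ᵥ Emat h *ᵥ fun a => w a.rev := by
  rw [show (fun a : Fin h => w a.rev) = (fun a : Fin h => w a) ∘ Fin.rev from rfl,
    comp_rev_dotProduct_mulVec_comp_rev, ← transpose_delayMatrix_mul_self, ← mulVec_mulVec,
    dotProduct_mulVec, vecMul_transpose, ← Fin.sum_univ_eq_sum_range]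
  simp only [dotProduct, delayMatrix_mulVec_apply, sq]

lemma dotProduct_self_comp_rev (h : ℕ) (w : ℕ → ℝ) :
    (fun a : Fin h => w a.rev) ⬝ᵥ (fun a => w a.rev) = ∑ j ∈ range h, w j ^ 2 := by
  rw [show (fun a : Fin h => w a.rev) = (fun a : Fin h => w a) ∘ Fin.revPerm from rfl,
    comp_equiv_dotProduct_comp_equiv, dotProduct, ← Fin.sum_univ_eq_sum_range]
  simp only [sq]

theorem sum_sq_sum_range_le_lamMax {h d : ℕ} (hd : d ≤ h) (w : ℕ → ℝ) :
    ∑ j ∈ range d, (∑ i ∈ range j, w i) ^ 2 ≤ lamMax h * ∑ j ∈ range d, w j ^ 2 := by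
  set w' : ℕ → ℝ := fun i => if i < d then w i else 0
  have hprefix (j : ℕ) (hj : j ∈ range d) : ∑ i ∈ range j, w' i = ∑ i ∈ range j, w i :=
    sum_congr rfl fun i hi => if_pos (by simp at hi hj; omega)
  have hnorm : ∑ j ∈ range h, w' j ^ 2 = ∑ j ∈ range d, w j ^ 2 := by
    rw [← sum_range_add_sum_Ico _ hd, sum_eq_zero (s := Ico d h), add_zero]
    · exact sum_congr rfl fun j hj => by simp [w', mem_range.1 hj]
    · exact fun j hj => by simp [w', (mem_Ico.1 hj).1.not_gt]
  calc ∑ j ∈ range d, (∑ i ∈ range j, w i) ^ 2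
      = ∑ j ∈ range d, (∑ i ∈ range j, w' i) ^ 2 := sum_congr rfl fun j hj => by rw [hprefix j hj]
    _ ≤ ∑ j ∈ range h, (∑ i ∈ range j, w' i) ^ 2 :=
      sum_le_sum_of_subset_of_nonneg (range_subset_range.2 hd) fun _ _ _ => sq_nonneg _
    _ ≤ lamMax h * ∑ j ∈ range h, w' j ^ 2 := by
      rw [sum_sq_sum_range_eq_dotProduct_Emat_mulVec, ← dotProduct_self_comp_rev]
      exact (Emat_isHermitian h).dotProduct_mulVec_le_iSup_eigenvalues _
    _ = lamMax h * ∑ j ∈ range d, w j ^ 2 := by rw [hnorm]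

theorem exists_sum_sq_sum_range_eq_lamMax (h : ℕ) [NeZero h] :
    ∃ w : ℕ → ℝ,
      ∑ j ∈ range h, w j ^ 2 = 1 ∧ ∑ j ∈ range h, (∑ i ∈ range j, w i) ^ 2 = lamMax h := by
  obtain ⟨x, hx1, hx⟩ := (Emat_isHermitian h).exists_dotProduct_mulVec_eq_iSup_eigenvalues
  set w : ℕ → ℝ := fun i => if hi : i < h then x (Fin.rev ⟨i, hi⟩) else 0
  have hwx : (fun a : Fin h => w a.rev) = x := funext fun a => by
    simp only [w, dif_pos a.rev.is_lt, Fin.eta, Fin.rev_rev]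
  refine ⟨w, by rw [← dotProduct_self_comp_rev, hwx, hx1], ?_⟩
  rw [sum_sq_sum_range_eq_dotProduct_Emat_mulVec, hwx, hx, lamMax]

theorem sum_norm_sq_sum_range_le_lamMax {ι : Type*} [Fintype ι] {h d : ℕ} (hd : d ≤ h)
    (z : ℕ → EuclideanSpace ℝ ι) :
    ∑ j ∈ range d, ‖∑ i ∈ range j, z i‖ ^ 2 ≤ lamMax h * ∑ j ∈ range d, ‖z j‖ ^ 2 := by
  simp only [EuclideanSpace.real_norm_sq_eq, WithLp.ofLp_sum, Finset.sum_apply]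
  rw [sum_comm, sum_comm (s := range d), mul_sum]
  exact sum_le_sum fun c _ => sum_sq_sum_range_le_lamMax hd fun i => z i c

def IsDelayOf {E : Type*} [AddCommMonoid E] (t : ℕ → ℕ) (y e : ℕ → E) : Prop :=
  ∀ k s : ℕ, t k ≤ s → s < t (k + 1) → e s = ∑ i ∈ Ico (t k) s, y i

lemma sum_range_eq_sum_sum_Ico_min {M : Type*} [AddCommGroup M] {t : ℕ → ℕ} (ht : StrictMono t)
    (ht0 : t 0 = 0) (f : ℕ → M) (N : ℕ) :
    ∑ s ∈ range N, f s = ∑ k ∈ range N, ∑ s ∈ Ico (t k) (min (t (k + 1)) N), f s := by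
  set g : ℕ → M := fun s => if s < N then f s else 0
  have hblock (k : ℕ) :
      ∑ s ∈ Ico (t k) (min (t (k + 1)) N), f s = ∑ s ∈ Ico (t k) (t (k + 1)), g s := by
    rw [← sum_filter, Ico_filter_lt]
  have hrange : (range (t N)).filter (· < N) = range N := by
    ext s; simp only [mem_filter, mem_range]; have : N ≤ t N := ht.id_le N; omega
  simp only [hblock, fun k : ℕ => sum_Ico_eq_sub g (ht.monotone k.le_succ)]
  rw [sum_range_sub (fun k => ∑ s ∈ range (t k), g s), ht0, range_zero, sum_empty, sub_zero,
    ← sum_filter, hrange]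

theorem sum_range_norm_sq_le_of_isDelayOf {ι : Type*} [Fintype ι] {h : ℕ} {t : ℕ → ℕ}
    (ht : StrictMono t) (ht0 : t 0 = 0) (hgap : ∀ k, t (k + 1) - t k ≤ h)
    {y e : ℕ → EuclideanSpace ℝ ι} (he : IsDelayOf t y e) (N : ℕ) :
    ∑ s ∈ range N, ‖e s‖ ^ 2 ≤ lamMax h * ∑ s ∈ range N, ‖y s‖ ^ 2 := by
  rw [sum_range_eq_sum_sum_Ico_min ht ht0 (fun s => ‖e s‖ ^ 2),
    sum_range_eq_sum_sum_Ico_min ht ht0 (fun s => ‖y s‖ ^ 2), mul_sum]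
  refine sum_le_sum fun k _ => ?_
  set m := min (t (k + 1)) N
  have hm : m - t k ≤ h := by have := hgap k; omega
  have hblock (j : ℕ) (hj : j ∈ range (m - t k)) :
      ‖e (t k + j)‖ ^ 2 = ‖∑ i ∈ range j, y (t k + i)‖ ^ 2 := by
    rw [he k _ (by omega) (by simp at hj; omega), sum_Ico_eq_sum_range, add_tsub_cancel_left]
  rw [sum_Ico_eq_sum_range, sum_Ico_eq_sum_range, sum_congr rfl hblock]
  exact sum_norm_sq_sum_range_le_lamMax hm _

def IsDelayGainBound (ι : Type*) [Fintype ι] (h : ℕ) (γ : ℝ) : Prop :=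
  ∀ t : ℕ → ℕ, StrictMono t → t 0 = 0 → (∀ k : ℕ, t (k + 1) - t k ≤ h) →
    ∀ y e : ℕ → EuclideanSpace ℝ ι, IsDelayOf t y e →
      ∀ T : ℕ, ∑ s ∈ range (T + 1), ‖e s‖ ^ 2 ≤ γ ^ 2 * ∑ s ∈ range (T + 1), ‖y s‖ ^ 2

theorem isDelayGainBound_sqrt_lamMax (ι : Type*) [Fintype ι] (h : ℕ) :
    IsDelayGainBound ι h √(lamMax h) := by
  intro t ht ht0 hgap y e he T
  rw [Real.sq_sqrt (lamMax_nonneg h)]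
  exact sum_range_norm_sq_le_of_isDelayOf ht ht0 hgap he (T + 1)

theorem lamMax_le_sq_of_isDelayGainBound {ι : Type*} [Fintype ι] [Nonempty ι] {h : ℕ} {γ : ℝ}
    (hγ : IsDelayGainBound ι h γ) : lamMax h ≤ γ ^ 2 := by
  rcases Nat.eq_zero_or_pos h with rfl | hh
  · simp only [lamMax, Real.iSup_of_isEmpty]; positivity
  have : NeZero h := ⟨hh.ne'⟩
  obtain ⟨w, hw1, hw⟩ := exists_sum_sq_sum_range_eq_lamMax h
  obtain ⟨u, hu1⟩ := exists_norm_eq (EuclideanSpace ℝ ι) zero_le_one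
  have hu (c : ℝ) : ‖c • u‖ ^ 2 = c ^ 2 := by
    rw [norm_smul, hu1, mul_one, Real.norm_eq_abs, sq_abs]
  set y : ℕ → EuclideanSpace ℝ ι := fun s => w s • u
  have hdelay : IsDelayOf (· * h) y fun s => ∑ i ∈ Ico (s / h * h) s, y i := by
    intro k s hks hsk
    dsimp only
    rw [Nat.div_eq_of_lt_le hks hsk]
  have hbound := hγ (· * h) (strictMono_mul_right_of_pos hh) (zero_mul h)
    (fun k => by simp [add_one_mul]) y _ hdelay (h - 1)
  rw [Nat.sub_add_cancel hh] at hbound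
  have he : ∑ s ∈ range h, ‖∑ i ∈ Ico (s / h * h) s, y i‖ ^ 2 = lamMax h := by
    rw [← hw]
    refine sum_congr rfl fun s hs => ?_
    rw [Nat.div_eq_of_lt (mem_range.1 hs), zero_mul, Nat.Ico_zero_eq_range, ← sum_smul, hu]
  have hy : ∑ s ∈ range h, ‖y s‖ ^ 2 = 1 := by simp only [y, hu, hw1]
  rwa [he, hy, mul_one] at hbound

theorem delay_operator_l2_gain_exact_general (n : ℕ) (hn : 1 ≤ n) (hbar : ℕ) :
    sInf {γ : ℝ | 0 ≤ γ ∧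
      ∀ t : ℕ → ℕ, StrictMono t → t 0 = 0 → (∀ k : ℕ, t (k + 1) - t k ≤ hbar) →
        ∀ y e : ℕ → EuclideanSpace ℝ (Fin n),
          (∀ k s : ℕ, t k ≤ s → s < t (k + 1) →
            e s = ∑ i ∈ Finset.Ico (t k) s, y i) →
          ∀ T : ℕ, ∑ s ∈ Finset.range (T + 1), ‖e s‖ ^ 2
            ≤ γ ^ 2 * ∑ s ∈ Finset.range (T + 1), ‖y s‖ ^ 2}
      = Real.sqrt (lamMax hbar) := by
  have : Nonempty (Fin n) := ⟨⟨0, hn⟩⟩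
  change sInf {γ : ℝ | 0 ≤ γ ∧ IsDelayGainBound (Fin n) hbar γ} = _
  refine IsLeast.csInf_eq ⟨⟨Real.sqrt_nonneg _, isDelayGainBound_sqrt_lamMax _ _⟩, ?_⟩
  rintro γ ⟨hγ, hbound⟩
  exact (Real.sqrt_le_left hγ).2 (lamMax_le_sq_of_isDelayGainBound hbound)

/-- The ℓ₂ gain of the delay operator over all sampling patterns with intervals at most
`h̄` is exactly `sqrt(λmax(E_h̄))`: the infimum of all `γ ≥ 0` such that the truncated
energy bound `∑‖(Δy)(s)‖² ≤ γ² ∑‖y(s)‖²` holds for every sampling sequence, every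
signal, and every horizon equals `sqrt(λmax(E_h̄))`. -/
theorem delay_operator_l2_gain_exact (n : ℕ) (hn : 1 ≤ n) (hbar : ℕ) (hhbar : 1 ≤ hbar) :
    sInf {γ : ℝ | 0 ≤ γ ∧
      ∀ t : ℕ → ℕ, StrictMono t → t 0 = 0 → (∀ k : ℕ, t (k + 1) - t k ≤ hbar) →
        ∀ y e : ℕ → EuclideanSpace ℝ (Fin n),
          (∀ k s : ℕ, t k ≤ s → s < t (k + 1) →
            e s = ∑ i ∈ Finset.Ico (t k) s, y i) →
          ∀ T : ℕ, ∑ s ∈ Finset.range (T + 1), ‖e s‖ ^ 2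
            ≤ γ ^ 2 * ∑ s ∈ Finset.range (T + 1), ‖y s‖ ^ 2}
      = Real.sqrt (lamMax hbar) :=
  delay_operator_l2_gain_exact_general n hn hbar
end

section
/- Let n ∈ ℕ, n ≥ 1, let h̄ ∈ ℕ, h̄ ≥ 1, let X ∈ ℝ^{n×n} be symmetric positive definite and Y ∈ ℝ^{n×n} symmetric positive semidefinite. Then for every sampling sequence t : ℕ → ℕ with sampling intervals h_k ≤ h̄, every signal y : ℕ → ℝ^n with e = Δy, and every T ∈ ℕ, Σ_{s=0}^{T} ( y(s)ᵀ(λmax(E_{h̄})·X + Y)y(s) + 2·y(s)ᵀ Y e(s) − e(s)ᵀ X e(s) ) ≥ 0. (The delay operator satisfies the hard static IQC with multiplier Π = [[λmax(E_{h̄})X + Y, Y],[Y, −X]].) -/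
open Matrix Finset

/-!
On a sampling block the error is the prefix sum `P j = ∑ i < j, v i` of the block's input `v`,
and with `λ = λmax(E_h̄)` the summand splits as
`(v jᵀ Y v j + 2 v jᵀ Y P j) + (λ v jᵀ X v j - P jᵀ X P j)`.
The first part telescopes to `P Lᵀ Y P L ≥ 0`. Factoring `X = Bᵀ B` reduces the second to the
scalar inequality `∑ j < L, (∑ i < j, a i)² ≤ λ ∑ j < L, a j²`: after reversing `a` and
padding it with zeros to length `h̄`, its left side is the quadratic form of `E_h̄`, because
`min k k' = #{j | j < k ∧ j < k'}` makes that form a sum of squared tail sums.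
Summing the blocks, the last one truncated at `T`, gives the claim.
-/

lemma Matrix.IsHermitian.dotProduct_mulVec_le_iSup_eigenvalues_s13 {m : Type*} [Fintype m]
    [DecidableEq m] {A : Matrix m m ℝ} (hA : A.IsHermitian) (w : m → ℝ) :
    w ⬝ᵥ (A *ᵥ w) ≤ (⨆ i, hA.eigenvalues i) * (w ⬝ᵥ w) := by
  open scoped MatrixOrder in
  have hle : A ≤ algebraMap ℝ _ (⨆ i, hA.eigenvalues i) := by
    rw [le_algebraMap_iff_spectrum_le hA.isSelfAdjoint, hA.spectrum_real_eq_range_eigenvalues]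
    rintro _ ⟨i, rfl⟩
    exact le_ciSup (Finite.bddAbove_range _) i
  have := (Matrix.le_iff.mp hle).dotProduct_mulVec_nonneg w
  simpa [Algebra.algebraMap_eq_smul_one, sub_mulVec, dotProduct_sub, smul_mulVec] using this

lemma Emat_apply_eq_card (N : ℕ) (k k' : Fin N) :
    Emat N k k' = #{j | j < k ∧ j < k'} := by
  simp only [← lt_min_iff]
  rw [Finset.filter_gt_eq_Iio, Fin.card_Iio]
  simp [Emat]

lemma dotProduct_Emat_mulVec (N : ℕ) (w : Fin N → ℝ) :
    w ⬝ᵥ (Emat N *ᵥ w) = ∑ j, (∑ k ∈ Ioi j, w k) ^ 2 := by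
  calc w ⬝ᵥ (Emat N *ᵥ w)
      = ∑ k, ∑ k', ∑ j, if j < k ∧ j < k' then w k * w k' else 0 := by
        simp only [dotProduct, mulVec, mul_sum, Emat_apply_eq_card, sum_ite, sum_const_zero,
          add_zero, sum_const, nsmul_eq_mul]
        refine sum_congr rfl fun k _ => sum_congr rfl fun k' _ => by ring
    _ = ∑ j, ∑ k, ∑ k', if j < k ∧ j < k' then w k * w k' else 0 :=
        (sum_congr rfl fun _ _ => sum_comm).trans sum_comm
    _ = ∑ j, ∑ k ∈ Ioi j, ∑ k' ∈ Ioi j, w k * w k' := by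
        simp only [← filter_lt_eq_Ioi, sum_filter, ite_and, ite_sum_zero]
    _ = ∑ j, (∑ k ∈ Ioi j, w k) ^ 2 := by simp only [sq, sum_mul_sum]

lemma Fin.sum_Iio_eq_sum_range {M : Type*} [AddCommMonoid M] {N : ℕ} (f : ℕ → M) (j : Fin N) :
    ∑ i ∈ Iio j, f i = ∑ i ∈ range j, f i := by
  rw [← Nat.Iio_eq_range, ← Fin.map_valEmbedding_Iio, sum_map]
  rfl

lemma sum_sq_sum_Iio_le_lamMax (N : ℕ) (a : Fin N → ℝ) :
    ∑ j, (∑ i ∈ Iio j, a i) ^ 2 ≤ lamMax N * ∑ j, a j ^ 2 := by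
  have hrev (j : Fin N) : ∑ i ∈ Iio j, a i = ∑ k ∈ Ioi j.rev, a k.rev := by
    rw [← Fin.map_revPerm_Iio, sum_map]
    simp
  calc ∑ j, (∑ i ∈ Iio j, a i) ^ 2 = (a ∘ Fin.rev) ⬝ᵥ (Emat N *ᵥ (a ∘ Fin.rev)) := by
        rw [dotProduct_Emat_mulVec]
        exact Fintype.sum_equiv Fin.revPerm _ _ fun j => by simp [hrev]
    _ ≤ lamMax N * ((a ∘ Fin.rev) ⬝ᵥ (a ∘ Fin.rev)) :=
        (Emat_isHermitian N).dotProduct_mulVec_le_iSup_eigenvalues_s13 _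
    _ = lamMax N * ∑ j, a j ^ 2 := by
        rw [dotProduct]
        congr 1
        exact Fintype.sum_equiv Fin.revPerm _ _ fun j => by simp [sq]

lemma sum_range_sq_sum_range_le_lamMax {L N : ℕ} (hLN : L ≤ N) (a : ℕ → ℝ) :
    ∑ j ∈ range L, (∑ i ∈ range j, a i) ^ 2 ≤ lamMax N * ∑ j ∈ range L, a j ^ 2 := by
  set b : ℕ → ℝ := fun i => if i < L then a i else 0
  calc ∑ j ∈ range L, (∑ i ∈ range j, a i) ^ 2 = ∑ j ∈ range L, (∑ i ∈ range j, b i) ^ 2 := by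
        refine sum_congr rfl fun j hj => ?_
        congr 1
        refine sum_congr rfl fun i hi => ?_
        simp only [mem_range] at hi hj
        simp [b, hi.trans hj]
    _ ≤ ∑ j ∈ range N, (∑ i ∈ range j, b i) ^ 2 :=
        sum_le_sum_of_subset_of_nonneg (range_mono hLN) fun _ _ _ => sq_nonneg _
    _ = ∑ j : Fin N, (∑ i ∈ Iio j, b i) ^ 2 := by
        simp only [Fin.sum_Iio_eq_sum_range b]
        exact (Fin.sum_univ_eq_sum_range (fun j => (∑ i ∈ range j, b i) ^ 2) N).symm
    _ ≤ lamMax N * ∑ j : Fin N, b j ^ 2 := sum_sq_sum_Iio_le_lamMax N _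
    _ = lamMax N * ∑ j ∈ range L, a j ^ 2 := by
        rw [Fin.sum_univ_eq_sum_range (fun j => b j ^ 2), ← sum_range_add_sum_Ico _ hLN,
          sum_eq_zero (s := Ico L N) fun j hj => by simp [b, (mem_Ico.1 hj).1.not_gt], add_zero]
        exact congrArg _ (sum_congr rfl fun j hj => by simp [b, mem_range.1 hj])

lemma dotProduct_conjTranspose_mul_self_mulVec {m k : Type*} [Fintype m] [Fintype k]
    (B : Matrix k m ℝ) (u : m → ℝ) :
    u ⬝ᵥ ((Bᴴ * B) *ᵥ u) = ∑ c, (B *ᵥ u) c ^ 2 := by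
  rw [← mulVec_mulVec, dotProduct_mulVec, conjTranspose_eq_transpose_of_trivial, vecMul_transpose]
  simp only [dotProduct, sq]

lemma sum_range_quadForm_sum_range_le_lamMax {m : Type*} [Fintype m] {L N : ℕ}
    (hLN : L ≤ N) {X : Matrix m m ℝ} (hX : X.PosSemidef) (v : ℕ → m → ℝ) :
    ∑ j ∈ range L, (∑ i ∈ range j, v i) ⬝ᵥ (X *ᵥ ∑ i ∈ range j, v i)
      ≤ lamMax N * ∑ j ∈ range L, v j ⬝ᵥ (X *ᵥ v j) := by
  classical
  open scoped MatrixOrder in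
  obtain ⟨B, rfl⟩ := CStarAlgebra.nonneg_iff_eq_star_mul_self.mp hX.nonneg
  simp only [star_eq_conjTranspose, dotProduct_conjTranspose_mul_self_mulVec]
  simp only [mulVec_sum, Finset.sum_apply]
  rw [sum_comm, sum_comm (s := range L), mul_sum]
  exact sum_le_sum fun c _ => sum_range_sq_sum_range_le_lamMax hLN _

lemma Matrix.IsHermitian.dotProduct_mulVec_comm {m : Type*} [Fintype m] {Y : Matrix m m ℝ}
    (hY : Y.IsHermitian) (u w : m → ℝ) : u ⬝ᵥ (Y *ᵥ w) = w ⬝ᵥ (Y *ᵥ u) := by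
  rw [dotProduct_mulVec, ← mulVec_transpose, (isHermitian_iff_isSymm.mp hY).eq, dotProduct_comm]

lemma Matrix.IsHermitian.sum_range_quadForm_add_cross {m : Type*} [Fintype m]
    {Y : Matrix m m ℝ} (hY : Y.IsHermitian) (v : ℕ → m → ℝ) (L : ℕ) :
    ∑ j ∈ range L, (v j ⬝ᵥ (Y *ᵥ v j) + 2 * (v j ⬝ᵥ (Y *ᵥ ∑ i ∈ range j, v i)))
      = (∑ i ∈ range L, v i) ⬝ᵥ (Y *ᵥ ∑ i ∈ range L, v i) := by
  induction L with
  | zero => simp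
  | succ L ih =>
    rw [sum_range_succ, ih, sum_range_succ, mulVec_add, dotProduct_add, add_dotProduct,
      add_dotProduct, hY.dotProduct_mulVec_comm (∑ i ∈ range L, v i) (v L)]
    ring

lemma sum_range_IQC_integrand_nonneg {m : Type*} [Fintype m] {L N : ℕ}
    (hLN : L ≤ N) {X Y : Matrix m m ℝ} (hX : X.PosSemidef) (hY : Y.PosSemidef)
    (v : ℕ → m → ℝ) :
    0 ≤ ∑ j ∈ range L, (v j ⬝ᵥ ((lamMax N • X + Y) *ᵥ v j)
      + 2 * (v j ⬝ᵥ (Y *ᵥ ∑ i ∈ range j, v i))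
      - (∑ i ∈ range j, v i) ⬝ᵥ (X *ᵥ ∑ i ∈ range j, v i)) := by
  have hsplit : ∀ j, v j ⬝ᵥ ((lamMax N • X + Y) *ᵥ v j) + 2 * (v j ⬝ᵥ (Y *ᵥ ∑ i ∈ range j, v i))
      - (∑ i ∈ range j, v i) ⬝ᵥ (X *ᵥ ∑ i ∈ range j, v i)
      = (v j ⬝ᵥ (Y *ᵥ v j) + 2 * (v j ⬝ᵥ (Y *ᵥ ∑ i ∈ range j, v i)))
        + (lamMax N * (v j ⬝ᵥ (X *ᵥ v j))
          - (∑ i ∈ range j, v i) ⬝ᵥ (X *ᵥ ∑ i ∈ range j, v i)) := fun j => by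
    rw [add_mulVec, smul_mulVec, dotProduct_add, dotProduct_smul, smul_eq_mul]
    ring
  rw [sum_congr rfl fun j _ => hsplit j, sum_add_distrib, sum_sub_distrib, ← mul_sum,
    hY.isHermitian.sum_range_quadForm_add_cross]
  exact add_nonneg (hY.dotProduct_mulVec_nonneg _)
    (sub_nonneg.mpr (sum_range_quadForm_sum_range_le_lamMax hLN hX v))

lemma sum_range_nonneg_of_sum_Ico_nonneg {t : ℕ → ℕ} (ht : StrictMono t) (ht0 : t 0 = 0)
    {φ : ℕ → ℝ} (hφ : ∀ k m, t k ≤ m → m ≤ t (k + 1) → 0 ≤ ∑ s ∈ Ico (t k) m, φ s) (m : ℕ) :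
    0 ≤ ∑ s ∈ range m, φ s := by
  suffices ∀ k, ∀ m ≤ t k, 0 ≤ ∑ s ∈ range m, φ s from this m m (ht.id_le m)
  intro k
  induction k with
  | zero => simp [ht0]
  | succ k ih =>
    intro m hm
    rcases le_total m (t k) with hmk | hkm
    · exact ih m hmk
    · rw [← sum_range_add_sum_Ico _ hkm]
      exact add_nonneg (ih _ le_rfl) (hφ k m hkm hm)

theorem delay_operator_combined_IQC_general
    (n : ℕ) (hbar : ℕ)
    (X Y : Matrix (Fin n) (Fin n) ℝ) (hX : X.PosDef) (hY : Y.PosSemidef)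
    (t : ℕ → ℕ) (ht : StrictMono t) (ht0 : t 0 = 0)
    (hint : ∀ k : ℕ, t (k + 1) - t k ≤ hbar)
    (y e : ℕ → Fin n → ℝ)
    (he : ∀ k s : ℕ, t k ≤ s → s < t (k + 1) →
      e s = ∑ i ∈ Finset.Ico (t k) s, y i) :
    ∀ T : ℕ, 0 ≤ ∑ s ∈ Finset.range (T + 1),
      (y s ⬝ᵥ ((lamMax hbar • X + Y) *ᵥ y s) + 2 * (y s ⬝ᵥ (Y *ᵥ e s))
        - e s ⬝ᵥ (X *ᵥ e s)) := by
  intro T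
  refine sum_range_nonneg_of_sum_Ico_nonneg ht ht0 (fun k m hkm hm => ?_) (T + 1)
  have hlen : m - t k ≤ hbar := (Nat.sub_le_sub_right hm _).trans (hint k)
  have hblock := sum_range_IQC_integrand_nonneg hlen hX.posSemidef hY fun j => y (t k + j)
  refine hblock.trans_eq ?_
  rw [sum_Ico_eq_sum_range]
  refine sum_congr rfl fun j hj => ?_
  rw [he k (t k + j) (by omega) (by have := mem_range.mp hj; omega), sum_Ico_eq_sum_range,
    Nat.add_sub_cancel_left]

/-- The delay operator satisfies the hard static IQC with the combined multiplier
`Π = [[λmax(E_h̄)X + Y, Y], [Y, −X]]`, for any `X ≻ 0` and `Y ⪰ 0`. -/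
theorem delay_operator_combined_IQC
    (n : ℕ) (hn : 1 ≤ n) (hbar : ℕ) (hhbar : 1 ≤ hbar)
    (X Y : Matrix (Fin n) (Fin n) ℝ) (hX : X.PosDef) (hY : Y.PosSemidef)
    (t : ℕ → ℕ) (ht : StrictMono t) (ht0 : t 0 = 0)
    (hint : ∀ k : ℕ, t (k + 1) - t k ≤ hbar)
    (y e : ℕ → Fin n → ℝ)
    (he : ∀ k s : ℕ, t k ≤ s → s < t (k + 1) →
      e s = ∑ i ∈ Finset.Ico (t k) s, y i) :
    ∀ T : ℕ, 0 ≤ ∑ s ∈ Finset.range (T + 1),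
      (y s ⬝ᵥ ((lamMax hbar • X + Y) *ᵥ y s) + 2 * (y s ⬝ᵥ (Y *ᵥ e s))
        - e s ⬝ᵥ (X *ᵥ e s)) :=
  delay_operator_combined_IQC_general n hbar X Y hX hY t ht ht0 hint y e he
end

section
/- Let n, m ∈ ℕ with n, m ≥ 1, let A ∈ ℝ^{n×n}, B ∈ ℝ^{n×m}, K ∈ ℝ^{m×n}, and h̄ ∈ ℕ, h̄ ≥ 1; set A_cl := A + BK and λ := λmax(E_{h̄}). Suppose there exist symmetric matrices S ≻ 0, X ≻ 0, Y ⪰ 0 in ℝ^{n×n} such that for all (x, e) ∈ ℝ^n × ℝ^n with (x, e) ≠ 0, writing y := (I − A_cl)x − BKe: (A_cl x + BKe)ᵀ S (A_cl x + BKe) − xᵀ S x + yᵀ(λX + Y)y + 2·yᵀ Y e − eᵀ X e < 0. Then the origin of the aperiodically sampled closed loop is asymptotically stable: for every sampling sequence with intervals h_k ∈ {1,…,h̄} and every x₀, the trajectory satisfies x(s) → 0 as s → ∞, and for every ε > 0 there is δ > 0 such that ‖x₀‖ < δ implies ‖x(s)‖ < ε for all s and all such sampling sequences. -/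
open Matrix Finset

/-- `x` is the closed-loop trajectory of the aperiodically sampled system
`x(s+1) = A x(s) + B K x(t k)` for `s ∈ {t k, …, t (k+1) − 1}`, starting from `x₀`. -/
def IsTraj {n m : ℕ} (A : Matrix (Fin n) (Fin n) ℝ) (B : Matrix (Fin n) (Fin m) ℝ)
    (K : Matrix (Fin m) (Fin n) ℝ) (t : ℕ → ℕ) (x₀ : EuclideanSpace ℝ (Fin n))
    (x : ℕ → EuclideanSpace ℝ (Fin n)) : Prop :=
  x 0 = x₀ ∧ ∀ k s : ℕ, t k ≤ s → s < t (k + 1) →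
    x (s + 1) = A *ᵥ x s + B *ᵥ (K *ᵥ x (t k))

/-!
The LMI is a dissipation inequality for one step of the sampled loop. Fix a sampling instant and
let `ξ j` be the state `j` steps later, `e j = ξ 0 - ξ j = ∑_{r<j} y r` the sampling error with
increments `y r = ξ r - ξ (r + 1)`. Summing the LMI over `j < h`, the `Y`-terms telescope to
`e hᵀ Y e h ≥ 0`, and the `X`-terms are nonnegative by the discrete Wirtinger-type inequality
`∑_{s<h} |∑_{r<s} a r|² ≤ λmax(E_h̄) ∑_{s<h} |a s|²`, whose left side is the quadratic form of
`E_h` at the reversed sequence. Hence `V x = xᵀ S x` strictly decreases over every sampling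
interval of length `h ∈ {1,…,h̄}`. Compactness of the unit sphere turns this into a uniform
contraction `V (x (t (k+1))) ≤ ρ V (x (t k))` with `ρ < 1`; between samples the state grows by a
bounded factor, so `‖x s‖² ≤ D ρ^⌊s/h̄⌋ ‖x₀‖²`.
-/

open scoped MatrixOrder in
lemma dotProduct_Emat_mulVec_le {h : ℕ} (v : Fin h → ℝ) :
    v ⬝ᵥ (Emat h *ᵥ v) ≤ lamMax h * (v ⬝ᵥ v) := by
  have hE : Emat h ≤ algebraMap ℝ _ (lamMax h) := by
    refine le_algebraMap_of_spectrum_le ?_ (Emat_isHermitian h).isSelfAdjoint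
    rw [(Emat_isHermitian h).spectrum_real_eq_range_eigenvalues]
    rintro _ ⟨i, rfl⟩
    exact le_ciSup (Set.finite_range _).bddAbove i
  have := (Matrix.le_iff.mp hE).dotProduct_mulVec_nonneg v
  simpa [Algebra.algebraMap_eq_smul_one, Matrix.sub_mulVec, Matrix.smul_mulVec] using this

lemma sum_sq_sum_range_eq (h : ℕ) (a : ℕ → ℝ) :
    ∑ s ∈ range h, (∑ r ∈ range s, a r) ^ 2 =
      ∑ r ∈ range h, ∑ r' ∈ range h, ((h - max r r' - 1 : ℕ) : ℝ) * (a r * a r') := by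
  have hsq : ∀ s ∈ range h, (∑ r ∈ range s, a r) ^ 2 =
      ∑ r ∈ range h, ∑ r' ∈ range h, if max r r' < s then a r * a r' else 0 := by
    intro s hs
    have hsub : range s = (range h).filter (· < s) := by
      ext r; simp only [mem_range, mem_filter] at hs ⊢; omega
    rw [sq, hsub, sum_filter, sum_mul_sum]
    refine sum_congr rfl fun r _ => sum_congr rfl fun r' _ => ?_
    by_cases hr : r < s <;> by_cases hr' : r' < s <;> simp [hr, hr']
  rw [sum_congr rfl hsq, sum_comm]
  refine sum_congr rfl fun r _ => ?_
  rw [sum_comm]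
  refine sum_congr rfl fun r' _ => ?_
  rw [← sum_filter, sum_const, nsmul_eq_mul]
  congr
  rw [← Nat.card_Ioo]
  congr 1
  ext s
  simp only [mem_filter, mem_range, mem_Ioo]
  omega

lemma dotProduct_Emat_mulVec_reverse (h : ℕ) (a : ℕ → ℝ) :
    (fun i : Fin h => a (h - 1 - i)) ⬝ᵥ (Emat h *ᵥ fun i => a (h - 1 - i)) =
      ∑ s ∈ range h, (∑ r ∈ range s, a r) ^ 2 := by
  rw [sum_sq_sum_range_eq, ← sum_range_reflect]
  simp_rw [← sum_range_reflect (fun r' => ((h - max _ r' - 1 : ℕ) : ℝ) * _) h, sum_range,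
    dotProduct, mulVec, dotProduct, mul_sum]
  refine sum_congr rfl fun i _ => sum_congr rfl fun j _ => ?_
  rw [show h - max (h - 1 - i) (h - 1 - j) - 1 = min (i : ℕ) j by omega]
  simp only [Emat, Nat.cast_min]
  ring

lemma sum_sq_sum_range_le (h : ℕ) (a : ℕ → ℝ) :
    ∑ s ∈ range h, (∑ r ∈ range s, a r) ^ 2 ≤ lamMax h * ∑ s ∈ range h, a s ^ 2 := by
  convert dotProduct_Emat_mulVec_le (fun i : Fin h => a (h - 1 - i)) using 2
  · exact (dotProduct_Emat_mulVec_reverse h a).symm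
  · rw [dotProduct, ← sum_range (fun i => a (h - 1 - i) * a (h - 1 - i)),
      sum_range_reflect (fun i => a i * a i)]
    simp only [sq]

lemma sum_sq_sum_range_le_of_le {h N : ℕ} (hh : h ≤ N) (a : ℕ → ℝ) :
    ∑ s ∈ range h, (∑ r ∈ range s, a r) ^ 2 ≤ lamMax N * ∑ s ∈ range h, a s ^ 2 := by
  set a' : ℕ → ℝ := fun r => if r < h then a r else 0
  have hrange : (range N).filter (· < h) = range h := by
    ext r; simp only [mem_filter, mem_range]; omega
  calc ∑ s ∈ range h, (∑ r ∈ range s, a r) ^ 2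
      = ∑ s ∈ range h, (∑ r ∈ range s, a' r) ^ 2 := by
        refine sum_congr rfl fun s hs => ?_
        rw [mem_range] at hs
        rw [sum_congr rfl fun r hr => if_pos ((mem_range.mp hr).trans hs)]
    _ ≤ ∑ s ∈ range N, (∑ r ∈ range s, a' r) ^ 2 :=
        sum_le_sum_of_subset_of_nonneg (range_mono hh) fun _ _ _ => sq_nonneg _
    _ ≤ lamMax N * ∑ s ∈ range N, a' s ^ 2 := sum_sq_sum_range_le N a'
    _ = lamMax N * ∑ s ∈ range h, a s ^ 2 := by
        simp only [a', ite_pow, zero_pow two_ne_zero, ← sum_filter, hrange]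

section QuadraticForms

variable {ι : Type*} [Fintype ι]

lemma sum_dotProduct_sum_range_le_of_le {h N : ℕ} (hh : h ≤ N) (w : ℕ → ι → ℝ) :
    ∑ s ∈ range h, (∑ r ∈ range s, w r) ⬝ᵥ (∑ r ∈ range s, w r) ≤
      lamMax N * ∑ s ∈ range h, w s ⬝ᵥ w s := by
  simp only [dotProduct, Finset.sum_apply, ← sq]
  rw [sum_comm, sum_comm (s := range h), mul_sum]
  exact sum_le_sum fun i _ => sum_sq_sum_range_le_of_le hh (w · i)

open scoped MatrixOrder in
lemma Matrix.PosSemidef.sum_dotProduct_mulVec_sum_range_le {X : Matrix ι ι ℝ}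
    (hX : X.PosSemidef) {h N : ℕ} (hh : h ≤ N) (y : ℕ → ι → ℝ) :
    ∑ s ∈ range h, (∑ r ∈ range s, y r) ⬝ᵥ (X *ᵥ ∑ r ∈ range s, y r) ≤
      lamMax N * ∑ s ∈ range h, y s ⬝ᵥ (X *ᵥ y s) := by
  classical
  obtain ⟨L, rfl⟩ := CStarAlgebra.nonneg_iff_eq_star_mul_self.mp hX.nonneg
  have hquad : ∀ z : ι → ℝ, z ⬝ᵥ ((star L * L) *ᵥ z) = (L *ᵥ z) ⬝ᵥ (L *ᵥ z) := fun z => by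
    rw [← mulVec_mulVec, dotProduct_mulVec, star_eq_conjTranspose,
      conjTranspose_eq_transpose_of_trivial, vecMul_transpose]
  simp only [hquad]
  simp only [mulVec_sum]
  exact sum_dotProduct_sum_range_le_of_le hh (L *ᵥ y ·)

lemma Matrix.IsHermitian.dotProduct_mulVec_sum_range {Y : Matrix ι ι ℝ} (hY : Y.IsHermitian)
    (y : ℕ → ι → ℝ) (h : ℕ) :
    (∑ r ∈ range h, y r) ⬝ᵥ (Y *ᵥ ∑ r ∈ range h, y r) =
      ∑ s ∈ range h, (y s ⬝ᵥ (Y *ᵥ y s) + 2 * (y s ⬝ᵥ (Y *ᵥ ∑ r ∈ range s, y r))) := by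
  induction h with
  | zero => simp
  | succ h ih =>
    have hsymm : (∑ r ∈ range h, y r) ⬝ᵥ (Y *ᵥ y h) = y h ⬝ᵥ (Y *ᵥ ∑ r ∈ range h, y r) := by
      rw [dotProduct_mulVec, ← mulVec_transpose, ← conjTranspose_eq_transpose_of_trivial,
        hY.eq, dotProduct_comm]
    rw [sum_range_succ, sum_range_succ, ← ih, add_dotProduct, mulVec_add, dotProduct_add,
      dotProduct_add, hsymm]
    ring

end QuadraticForms

def holdTransition {ι R : Type*} [Fintype ι] [DecidableEq ι] [Semiring R] (A BK : Matrix ι ι R) :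
    ℕ → Matrix ι ι R
  | 0 => 1
  | j + 1 => A * holdTransition A BK j + BK

section LMI

variable {n m : ℕ} (A : Matrix (Fin n) (Fin n) ℝ) (B : Matrix (Fin n) (Fin m) ℝ)
  (K : Matrix (Fin m) (Fin n) ℝ) (hbar : ℕ) (S X Y : Matrix (Fin n) (Fin n) ℝ)

noncomputable def lmiForm (x e : Fin n → ℝ) : ℝ :=
  ((A + B * K) *ᵥ x + B *ᵥ (K *ᵥ e)) ⬝ᵥ (S *ᵥ ((A + B * K) *ᵥ x + B *ᵥ (K *ᵥ e)))
    - x ⬝ᵥ (S *ᵥ x)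
    + (x - (A + B * K) *ᵥ x - B *ᵥ (K *ᵥ e)) ⬝ᵥ
        ((lamMax hbar • X + Y) *ᵥ (x - (A + B * K) *ᵥ x - B *ᵥ (K *ᵥ e)))
    + 2 * ((x - (A + B * K) *ᵥ x - B *ᵥ (K *ᵥ e)) ⬝ᵥ (Y *ᵥ e))
    - e ⬝ᵥ (X *ᵥ e)

variable {A B K hbar S X Y}

lemma lmiForm_eq {x e x' : Fin n → ℝ} (hx' : (A + B * K) *ᵥ x + B *ᵥ (K *ᵥ e) = x') :
    lmiForm A B K hbar S X Y x e =
      (x' ⬝ᵥ (S *ᵥ x') - x ⬝ᵥ (S *ᵥ x))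
        + (lamMax hbar * ((x - x') ⬝ᵥ (X *ᵥ (x - x'))) - e ⬝ᵥ (X *ᵥ e))
        + ((x - x') ⬝ᵥ (Y *ᵥ (x - x')) + 2 * ((x - x') ⬝ᵥ (Y *ᵥ e))) := by
  subst hx'
  simp only [lmiForm, sub_sub, add_mulVec, smul_mulVec, dotProduct_add, dotProduct_smul,
    smul_eq_mul]
  ring

lemma dotProduct_mulVec_holdTransition_lt (hX : X.PosSemidef) (hY : Y.PosSemidef)
    (hLMI : ∀ x e : Fin n → ℝ, ¬(x = 0 ∧ e = 0) → lmiForm A B K hbar S X Y x e < 0)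
    {h : ℕ} (h1 : 1 ≤ h) (h2 : h ≤ hbar) {z : Fin n → ℝ} (hz : z ≠ 0) :
    (holdTransition A (B * K) h *ᵥ z) ⬝ᵥ (S *ᵥ (holdTransition A (B * K) h *ᵥ z)) <
      z ⬝ᵥ (S *ᵥ z) := by
  set ξ : ℕ → Fin n → ℝ := fun j => holdTransition A (B * K) j *ᵥ z
  set y : ℕ → Fin n → ℝ := fun j => ξ j - ξ (j + 1)
  have hξ0 : ξ 0 = z := one_mulVec z
  have hξ : ∀ j, (A + B * K) *ᵥ ξ j + B *ᵥ (K *ᵥ (z - ξ j)) = ξ (j + 1) := fun j => by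
    simp only [ξ, holdTransition, add_mulVec, ← mulVec_mulVec, mulVec_sub]
    abel
  have he : ∀ j, ∑ r ∈ range j, y r = z - ξ j := fun j => by rw [sum_range_sub', hξ0]
  have hneg : ∑ s ∈ range h, lmiForm A B K hbar S X Y (ξ s) (z - ξ s) < 0 := by
    refine sum_neg' (fun s _ => ?_) ⟨0, mem_range.mpr h1, hLMI _ _ fun h0 => hz (hξ0 ▸ h0.1)⟩
    by_cases h0 : ξ s = 0 ∧ z - ξ s = 0
    · rw [h0.2, h0.1]
      simp [lmiForm]
    · exact (hLMI _ _ h0).le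
  rw [sum_congr rfl fun s _ => lmiForm_eq (hξ s), sum_add_distrib, sum_add_distrib,
    sum_range_sub (fun j => ξ j ⬝ᵥ (S *ᵥ ξ j)), sum_sub_distrib, ← mul_sum] at hneg
  have hX' := hX.sum_dotProduct_mulVec_sum_range_le h2 y
  have hY' := hY.1.dotProduct_mulVec_sum_range y h
  simp only [he] at hX' hY'
  have hY0 : 0 ≤ (z - ξ h) ⬝ᵥ (Y *ᵥ (z - ξ h)) := by
    simpa using hY.dotProduct_mulVec_nonneg (z - ξ h)
  rw [hξ0] at hneg
  linarith

end LMI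

section Homogeneous

variable {E : Type*} [NormedAddCommGroup E] [NormedSpace ℝ E] [FiniteDimensional ℝ E]
  {f g : E → ℝ}

/-- The best constant is attained on a nonzero vector unless it is `0`; this is what makes it
`< 1` when `f < g` away from `0`. -/
lemma exists_le_mul_of_homogeneous (hf : Continuous f) (hg : Continuous g)
    (hf2 : ∀ (c : ℝ) x, f (c • x) = c ^ 2 * f x) (hg2 : ∀ (c : ℝ) x, g (c • x) = c ^ 2 * g x)
    (hg_pos : ∀ x ≠ 0, 0 < g x) :
    ∃ C, 0 ≤ C ∧ (∀ x, f x ≤ C * g x) ∧ (C = 0 ∨ ∃ z ≠ 0, f z = C * g z) := by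
  have hf_zero : f 0 = 0 := by simpa using hf2 0 0
  have hg_zero : g 0 = 0 := by simpa using hg2 0 0
  rcases subsingleton_or_nontrivial E with hE | hE
  · exact ⟨0, le_rfl, fun x => by simp [Subsingleton.elim x 0, hf_zero], Or.inl rfl⟩
  have hpos : ∀ u ∈ Metric.sphere (0 : E) 1, 0 < g u := fun u hu =>
    hg_pos u (ne_zero_of_mem_unit_sphere ⟨u, hu⟩)
  obtain ⟨z, hz, hmax⟩ := (isCompact_sphere (0 : E) 1).exists_isMaxOn
    (NormedSpace.sphere_nonempty.mpr zero_le_one)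
    (hf.continuousOn.div hg.continuousOn fun u hu => (hpos u hu).ne')
  refine ⟨max (f z / g z) 0, le_max_right _ _, fun x => ?_, ?_⟩
  · rcases eq_or_ne x 0 with rfl | hx
    · simp [hf_zero, hg_zero]
    have hu : ‖x‖⁻¹ • x ∈ Metric.sphere (0 : E) 1 := by simp [norm_smul, hx]
    have hfu := (div_le_iff₀ (hpos _ hu)).mp (hmax hu)
    rw [← smul_inv_smul₀ (norm_ne_zero_iff.mpr hx) x, hf2, hg2]
    calc ‖x‖ ^ 2 * f (‖x‖⁻¹ • x) ≤ ‖x‖ ^ 2 * (f z / g z * g (‖x‖⁻¹ • x)) := by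
          gcongr
          exact hfu
      _ ≤ ‖x‖ ^ 2 * (max (f z / g z) 0 * g (‖x‖⁻¹ • x)) := by
        gcongr
        · exact (hpos _ hu).le
        · exact le_max_left _ _
      _ = _ := by ring
  · rcases le_total (f z / g z) 0 with h | h
    · exact Or.inl (max_eq_right h)
    · refine Or.inr ⟨z, ne_zero_of_mem_unit_sphere ⟨z, hz⟩, ?_⟩
      rw [max_eq_left h, div_mul_cancel₀ _ (hpos z hz).ne']

lemma exists_lt_one_le_mul_of_homogeneous (hf : Continuous f) (hg : Continuous g)
    (hf2 : ∀ (c : ℝ) x, f (c • x) = c ^ 2 * f x) (hg2 : ∀ (c : ℝ) x, g (c • x) = c ^ 2 * g x)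
    (hg_pos : ∀ x ≠ 0, 0 < g x) (hfg : ∀ x ≠ 0, f x < g x) :
    ∃ ρ, 0 ≤ ρ ∧ ρ < 1 ∧ ∀ x, f x ≤ ρ * g x := by
  obtain ⟨C, hC0, hC, hCz⟩ := exists_le_mul_of_homogeneous hf hg hf2 hg2 hg_pos
  refine ⟨C, hC0, ?_, hC⟩
  rcases hCz with rfl | ⟨z, hz, hfz⟩
  · exact one_pos
  · have := hfg z hz
    rw [hfz] at this
    exact (mul_lt_iff_lt_one_left (hg_pos z hz)).mp this

end Homogeneous

section QuadraticBounds

variable {ι : Type*} [Fintype ι] {S : Matrix ι ι ℝ}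

lemma smul_dotProduct_mulVec_smul (c : ℝ) (S : Matrix ι ι ℝ) (z : ι → ℝ) :
    (c • z) ⬝ᵥ (S *ᵥ (c • z)) = c ^ 2 * (z ⬝ᵥ (S *ᵥ z)) := by
  simp only [mulVec_smul, smul_dotProduct, dotProduct_smul, smul_eq_mul]
  ring

lemma Matrix.PosDef.exists_sq_norm_le (hS : S.PosDef) :
    ∃ c, 0 ≤ c ∧ ∀ z : EuclideanSpace ℝ ι, ‖z‖ ^ 2 ≤ c * (z.ofLp ⬝ᵥ (S *ᵥ z.ofLp)) := by
  obtain ⟨c, hc0, hc, -⟩ := exists_le_mul_of_homogeneous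
    (f := fun z : EuclideanSpace ℝ ι => ‖z‖ ^ 2)
    (g := fun z : EuclideanSpace ℝ ι => z.ofLp ⬝ᵥ (S *ᵥ z.ofLp))
    (by fun_prop) (by fun_prop) (fun c z => by simp [norm_smul, mul_pow])
    (fun c z => by simp only [WithLp.ofLp_smul, smul_dotProduct_mulVec_smul])
    (fun z hz => by simpa using hS.dotProduct_mulVec_pos (by simpa using hz))
  exact ⟨c, hc0, hc⟩

lemma exists_dotProduct_mulVec_le_sq_norm (S : Matrix ι ι ℝ) :
    ∃ c, 0 ≤ c ∧ ∀ z : EuclideanSpace ℝ ι, z.ofLp ⬝ᵥ (S *ᵥ z.ofLp) ≤ c * ‖z‖ ^ 2 := by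
  obtain ⟨c, hc0, hc, -⟩ := exists_le_mul_of_homogeneous
    (f := fun z : EuclideanSpace ℝ ι => z.ofLp ⬝ᵥ (S *ᵥ z.ofLp))
    (g := fun z : EuclideanSpace ℝ ι => ‖z‖ ^ 2)
    (by fun_prop) (by fun_prop)
    (fun c z => by simp only [WithLp.ofLp_smul, smul_dotProduct_mulVec_smul])
    (fun c z => by simp [norm_smul, mul_pow]) (fun z hz => pow_pos (norm_pos_iff.mpr hz) 2)
  exact ⟨c, hc0, hc⟩

lemma Matrix.PosDef.exists_forall_dotProduct_mulVec_le {α : Type*} (hS : S.PosDef)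
    (s : Finset α) (M : α → Matrix ι ι ℝ) :
    ∃ κ, 0 ≤ κ ∧ ∀ i ∈ s, ∀ z, (M i *ᵥ z) ⬝ᵥ (S *ᵥ (M i *ᵥ z)) ≤ κ * (z ⬝ᵥ (S *ᵥ z)) := by
  obtain ⟨κ, hκ0, hκ, -⟩ := exists_le_mul_of_homogeneous (E := ι → ℝ)
    (f := fun z => ∑ i ∈ s, (M i *ᵥ z) ⬝ᵥ (S *ᵥ (M i *ᵥ z))) (g := fun z => z ⬝ᵥ (S *ᵥ z))
    (by fun_prop) (by fun_prop)
    (fun c z => by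
      simp only [mul_sum]
      exact sum_congr rfl fun i _ => by rw [mulVec_smul, smul_dotProduct_mulVec_smul])
    (fun c z => smul_dotProduct_mulVec_smul c S z)
    (fun z hz => by simpa using hS.dotProduct_mulVec_pos hz)
  refine ⟨κ, hκ0, fun i hi z => le_trans ?_ (hκ z)⟩
  refine single_le_sum (f := fun i => (M i *ᵥ z) ⬝ᵥ (S *ᵥ (M i *ᵥ z))) (fun j _ => ?_) hi
  simpa using hS.posSemidef.dotProduct_mulVec_nonneg (M j *ᵥ z)

lemma Matrix.PosDef.exists_lt_one_forall_dotProduct_mulVec_le {α : Type*} (hS : S.PosDef)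
    (s : Finset α) (M : α → Matrix ι ι ℝ)
    (hM : ∀ i ∈ s, ∀ z ≠ 0, (M i *ᵥ z) ⬝ᵥ (S *ᵥ (M i *ᵥ z)) < z ⬝ᵥ (S *ᵥ z)) :
    ∃ ρ, 0 ≤ ρ ∧ ρ < 1 ∧
      ∀ i ∈ s, ∀ z, (M i *ᵥ z) ⬝ᵥ (S *ᵥ (M i *ᵥ z)) ≤ ρ * (z ⬝ᵥ (S *ᵥ z)) := by
  have hρ : ∀ i, ∃ ρ, 0 ≤ ρ ∧ ρ < 1 ∧
      (i ∈ s → ∀ z, (M i *ᵥ z) ⬝ᵥ (S *ᵥ (M i *ᵥ z)) ≤ ρ * (z ⬝ᵥ (S *ᵥ z))) := by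
    intro i
    by_cases hi : i ∈ s
    · obtain ⟨ρ, hρ0, hρ1, hρ⟩ := exists_lt_one_le_mul_of_homogeneous (E := ι → ℝ)
        (f := fun z => (M i *ᵥ z) ⬝ᵥ (S *ᵥ (M i *ᵥ z))) (g := fun z => z ⬝ᵥ (S *ᵥ z))
        (by fun_prop) (by fun_prop)
        (fun c z => by rw [mulVec_smul, smul_dotProduct_mulVec_smul])
        (fun c z => smul_dotProduct_mulVec_smul c S z)
        (fun z hz => by simpa using hS.dotProduct_mulVec_pos hz) (hM i hi)
      exact ⟨ρ, hρ0, hρ1, fun _ => hρ⟩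
    · exact ⟨0, le_rfl, one_pos, fun h => absurd h hi⟩
  choose ρ hρ0 hρ1 hρ using hρ
  rcases s.eq_empty_or_nonempty with rfl | hs
  · exact ⟨0, le_rfl, one_pos, by simp⟩
  obtain ⟨i₀, -, hmax⟩ := s.exists_max_image ρ hs
  refine ⟨ρ i₀, hρ0 i₀, hρ1 i₀, fun i hi z => (hρ i hi z).trans ?_⟩
  exact mul_le_mul_of_nonneg_right (hmax i hi)
    (by simpa using hS.posSemidef.dotProduct_mulVec_nonneg z)

end QuadraticBounds

lemma exists_le_lt_succ_of_strictMono {t : ℕ → ℕ} (ht : StrictMono t) (h0 : t 0 = 0) (s : ℕ) :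
    ∃ k, t k ≤ s ∧ s < t (k + 1) := by
  induction s with
  | zero => exact ⟨0, h0.le, by have := ht (Nat.lt_add_one 0); omega⟩
  | succ s ih =>
    obtain ⟨k, hks, hsk⟩ := ih
    by_cases hs : s + 1 < t (k + 1)
    · exact ⟨k, by omega, hs⟩
    · exact ⟨k + 1, by omega, by have := ht (Nat.lt_add_one (k + 1)); omega⟩

lemma le_mul_of_forall_sub_le {t : ℕ → ℕ} {N : ℕ} (h0 : t 0 = 0)
    (hgap : ∀ k, t (k + 1) - t k ≤ N) (k : ℕ) : t k ≤ k * N := by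
  induction k with
  | zero => simp [h0]
  | succ k ih =>
    have := hgap k
    rw [add_mul, one_mul]
    omega

section Trajectory

variable {n m : ℕ} {A : Matrix (Fin n) (Fin n) ℝ} {B : Matrix (Fin n) (Fin m) ℝ}
  {K : Matrix (Fin m) (Fin n) ℝ} {S : Matrix (Fin n) (Fin n) ℝ} {hbar : ℕ} {t : ℕ → ℕ}
  {x₀ : EuclideanSpace ℝ (Fin n)} {x : ℕ → EuclideanSpace ℝ (Fin n)}

lemma IsTraj.ofLp_add (hx : IsTraj A B K t x₀ x) {k j : ℕ} (hj : t k + j ≤ t (k + 1)) :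
    (x (t k + j)).ofLp = holdTransition A (B * K) j *ᵥ (x (t k)).ofLp := by
  induction j with
  | zero => simp [holdTransition]
  | succ j ih =>
    rw [← add_assoc, hx.2 k (t k + j) (by omega) (by omega), ih (by omega)]
    simp only [holdTransition, add_mulVec, ← mulVec_mulVec]

lemma IsTraj.dotProduct_mulVec_le (hx : IsTraj A B K t x₀ x)
    (hgap : ∀ k, t (k + 1) - t k ≤ hbar) {κ : ℝ}
    (hκ : ∀ j ∈ range (hbar + 1), ∀ z, (holdTransition A (B * K) j *ᵥ z) ⬝ᵥ
      (S *ᵥ (holdTransition A (B * K) j *ᵥ z)) ≤ κ * (z ⬝ᵥ (S *ᵥ z)))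
    {k s : ℕ} (hks : t k ≤ s) (hsk : s < t (k + 1)) :
    (x s).ofLp ⬝ᵥ (S *ᵥ (x s).ofLp) ≤ κ * ((x (t k)).ofLp ⬝ᵥ (S *ᵥ (x (t k)).ofLp)) := by
  obtain ⟨j, rfl⟩ := Nat.exists_eq_add_of_le hks
  rw [hx.ofLp_add hsk.le]
  exact hκ j (mem_range.mpr (by have := hgap k; omega)) _

lemma IsTraj.dotProduct_mulVec_le_pow (hx : IsTraj A B K t x₀ x) (ht : StrictMono t)
    (h0 : t 0 = 0) (hgap : ∀ k, t (k + 1) - t k ≤ hbar) {ρ : ℝ} (hρ0 : 0 ≤ ρ)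
    (hρ : ∀ h ∈ Icc 1 hbar, ∀ z, (holdTransition A (B * K) h *ᵥ z) ⬝ᵥ
      (S *ᵥ (holdTransition A (B * K) h *ᵥ z)) ≤ ρ * (z ⬝ᵥ (S *ᵥ z))) (k : ℕ) :
    (x (t k)).ofLp ⬝ᵥ (S *ᵥ (x (t k)).ofLp) ≤ ρ ^ k * (x₀.ofLp ⬝ᵥ (S *ᵥ x₀.ofLp)) := by
  induction k with
  | zero => simp [h0, hx.1]
  | succ k ih =>
    have hk := ht (Nat.lt_add_one k)
    have hstep := hx.ofLp_add (k := k) (j := t (k + 1) - t k) (by omega)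
    rw [Nat.add_sub_cancel' hk.le] at hstep
    rw [hstep, pow_succ', mul_assoc]
    exact (hρ _ (mem_Icc.mpr ⟨by omega, hgap k⟩) _).trans (mul_le_mul_of_nonneg_left ih hρ0)

end Trajectory

lemma exists_sq_norm_le_pow {n m : ℕ} {A : Matrix (Fin n) (Fin n) ℝ}
    {B : Matrix (Fin n) (Fin m) ℝ} {K : Matrix (Fin m) (Fin n) ℝ} {hbar : ℕ}
    {S X Y : Matrix (Fin n) (Fin n) ℝ} (hS : S.PosDef) (hX : X.PosSemidef) (hY : Y.PosSemidef)
    (hLMI : ∀ x e : Fin n → ℝ, ¬(x = 0 ∧ e = 0) → lmiForm A B K hbar S X Y x e < 0) :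
    ∃ D ρ : ℝ, 0 ≤ D ∧ 0 ≤ ρ ∧ ρ < 1 ∧
      ∀ t : ℕ → ℕ, StrictMono t → t 0 = 0 → (∀ k, t (k + 1) - t k ≤ hbar) →
        ∀ (x₀ : EuclideanSpace ℝ (Fin n)) (x : ℕ → EuclideanSpace ℝ (Fin n)),
          IsTraj A B K t x₀ x → ∀ s, ‖x s‖ ^ 2 ≤ D * ‖x₀‖ ^ 2 * ρ ^ (s / hbar) := by
  obtain ⟨ρ, hρ0, hρ1, hρ⟩ := hS.exists_lt_one_forall_dotProduct_mulVec_le (Icc 1 hbar)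
    (holdTransition A (B * K)) fun h hh _ hz =>
      dotProduct_mulVec_holdTransition_lt hX hY hLMI (mem_Icc.mp hh).1 (mem_Icc.mp hh).2 hz
  obtain ⟨κ, hκ0, hκ⟩ :=
    hS.exists_forall_dotProduct_mulVec_le (range (hbar + 1)) (holdTransition A (B * K))
  obtain ⟨c₁, hc₁0, hc₁⟩ := hS.exists_sq_norm_le
  obtain ⟨c₂, hc₂0, hc₂⟩ := exists_dotProduct_mulVec_le_sq_norm S
  refine ⟨c₁ * κ * c₂, ρ, by positivity, hρ0, hρ1, fun t ht h0 hgap x₀ x hx s => ?_⟩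
  obtain ⟨k, hks, hsk⟩ := exists_le_lt_succ_of_strictMono ht h0 s
  have hk : s / hbar ≤ k := Nat.lt_succ_iff.mp <| Nat.div_lt_of_lt_mul <| by
    rw [mul_comm]
    exact hsk.trans_le (le_mul_of_forall_sub_le h0 hgap (k + 1))
  have hV : ∀ z : EuclideanSpace ℝ (Fin n), 0 ≤ z.ofLp ⬝ᵥ (S *ᵥ z.ofLp) := fun z => by
    simpa using hS.posSemidef.dotProduct_mulVec_nonneg z.ofLp
  calc ‖x s‖ ^ 2 ≤ c₁ * ((x s).ofLp ⬝ᵥ (S *ᵥ (x s).ofLp)) := hc₁ _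
    _ ≤ c₁ * (κ * ((x (t k)).ofLp ⬝ᵥ (S *ᵥ (x (t k)).ofLp))) := by
      gcongr
      exact hx.dotProduct_mulVec_le hgap hκ hks hsk
    _ ≤ c₁ * (κ * (ρ ^ k * (x₀.ofLp ⬝ᵥ (S *ᵥ x₀.ofLp)))) := by
      gcongr
      exact hx.dotProduct_mulVec_le_pow ht h0 hgap hρ0 hρ k
    _ ≤ c₁ * (κ * (ρ ^ (s / hbar) * (c₂ * ‖x₀‖ ^ 2))) := by
      gcongr c₁ * (κ * ?_)
      exact mul_le_mul (pow_le_pow_of_le_one hρ0 hρ1.le hk) (hc₂ x₀) (hV x₀) (by positivity)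
    _ = c₁ * κ * c₂ * ‖x₀‖ ^ 2 * ρ ^ (s / hbar) := by ring

lemma tendsto_zero_of_sq_norm_le_pow {E : Type*} [SeminormedAddCommGroup E] {x : ℕ → E}
    {C ρ : ℝ} {N : ℕ} (hρ0 : 0 ≤ ρ) (hρ1 : ρ < 1) (hN : N ≠ 0)
    (hx : ∀ s, ‖x s‖ ^ 2 ≤ C * ρ ^ (s / N)) : Filter.Tendsto x Filter.atTop (nhds 0) := by
  rw [tendsto_zero_iff_norm_tendsto_zero]
  have hC : Filter.Tendsto (fun s => C * ρ ^ (s / N)) Filter.atTop (nhds 0) := by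
    simpa using ((tendsto_pow_atTop_nhds_zero_of_lt_one hρ0 hρ1).comp
      (Nat.tendsto_div_const_atTop hN)).const_mul C
  have hsq := squeeze_zero (fun s => by positivity) hx hC
  simpa [Real.sqrt_sq (norm_nonneg _)] using hsq.sqrt

lemma exists_pos_forall_lt_of_sq_le_mul_sq {D ε : ℝ} (hD : 0 ≤ D) (hε : 0 < ε) :
    ∃ δ > 0, ∀ a b : ℝ, 0 ≤ b → a ^ 2 ≤ D * b ^ 2 → b < δ → a < ε := by
  refine ⟨ε / √(D + 1), by positivity, fun a b hb hab hbδ => ?_⟩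
  have hD1 : 0 < √(D + 1) := by positivity
  have hb' : √(D + 1) * b < ε := (lt_div_iff₀' hD1).mp hbδ
  refine lt_of_pow_lt_pow_left₀ 2 hε.le ?_
  calc a ^ 2 ≤ D * b ^ 2 := hab
    _ ≤ (√(D + 1) * b) ^ 2 := by
      rw [mul_pow, Real.sq_sqrt (by positivity)]
      gcongr
      linarith
    _ < ε ^ 2 := by gcongr

theorem model_based_stability_general
    (n m : ℕ)
    (A : Matrix (Fin n) (Fin n) ℝ) (B : Matrix (Fin n) (Fin m) ℝ)
    (K : Matrix (Fin m) (Fin n) ℝ) (hbar : ℕ)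
    (S X Y : Matrix (Fin n) (Fin n) ℝ)
    (hS : S.PosDef) (hX : X.PosDef) (hY : Y.PosSemidef)
    (hLMI : ∀ x e : Fin n → ℝ, ¬(x = 0 ∧ e = 0) →
      ((A + B * K) *ᵥ x + B *ᵥ (K *ᵥ e)) ⬝ᵥ (S *ᵥ ((A + B * K) *ᵥ x + B *ᵥ (K *ᵥ e)))
        - x ⬝ᵥ (S *ᵥ x)
        + (x - (A + B * K) *ᵥ x - B *ᵥ (K *ᵥ e)) ⬝ᵥ
            ((lamMax hbar • X + Y) *ᵥ (x - (A + B * K) *ᵥ x - B *ᵥ (K *ᵥ e)))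
        + 2 * ((x - (A + B * K) *ᵥ x - B *ᵥ (K *ᵥ e)) ⬝ᵥ (Y *ᵥ e))
        - e ⬝ᵥ (X *ᵥ e) < 0) :
    (∀ t : ℕ → ℕ, StrictMono t → t 0 = 0 → (∀ k : ℕ, t (k + 1) - t k ≤ hbar) →
      ∀ (x₀ : EuclideanSpace ℝ (Fin n)) (x : ℕ → EuclideanSpace ℝ (Fin n)),
        IsTraj A B K t x₀ x → Filter.Tendsto x Filter.atTop (nhds 0)) ∧
    (∀ ε : ℝ, 0 < ε → ∃ δ : ℝ, 0 < δ ∧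
      ∀ t : ℕ → ℕ, StrictMono t → t 0 = 0 → (∀ k : ℕ, t (k + 1) - t k ≤ hbar) →
        ∀ (x₀ : EuclideanSpace ℝ (Fin n)) (x : ℕ → EuclideanSpace ℝ (Fin n)),
          IsTraj A B K t x₀ x → ‖x₀‖ < δ → ∀ s : ℕ, ‖x s‖ < ε) := by
  obtain ⟨D, ρ, hD, hρ0, hρ1, hbound⟩ := exists_sq_norm_le_pow hS hX.posSemidef hY hLMI
  refine ⟨fun t ht h0 hgap x₀ x hx => ?_, fun ε hε => ?_⟩
  · have hbar0 : hbar ≠ 0 := by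
      have := hgap 0
      have := ht (Nat.lt_add_one 0)
      omega
    exact tendsto_zero_of_sq_norm_le_pow hρ0 hρ1 hbar0 (hbound t ht h0 hgap x₀ x hx)
  · obtain ⟨δ, hδ, hδε⟩ := exists_pos_forall_lt_of_sq_le_mul_sq hD hε
    refine ⟨δ, hδ, fun t ht h0 hgap x₀ x hx hx₀ s => hδε _ _ (norm_nonneg _) ?_ hx₀⟩
    exact (hbound t ht h0 hgap x₀ x hx s).trans
      (mul_le_of_le_one_right (by positivity) (pow_le_one₀ hρ0 hρ1.le))

/-- Model-based stability criterion: if the IQC-based LMI holds for some `S ≻ 0`,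
`X ≻ 0`, `Y ⪰ 0`, then the aperiodically sampled closed loop is asymptotically stable
for all sampling patterns with intervals in `{1,…,h̄}`. -/
theorem model_based_stability
    (n m : ℕ) (hn : 1 ≤ n) (hm : 1 ≤ m)
    (A : Matrix (Fin n) (Fin n) ℝ) (B : Matrix (Fin n) (Fin m) ℝ)
    (K : Matrix (Fin m) (Fin n) ℝ) (hbar : ℕ) (hhbar : 1 ≤ hbar)
    (S X Y : Matrix (Fin n) (Fin n) ℝ)
    (hS : S.PosDef) (hX : X.PosDef) (hY : Y.PosSemidef)
    (hLMI : ∀ x e : Fin n → ℝ, ¬(x = 0 ∧ e = 0) →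
      ((A + B * K) *ᵥ x + B *ᵥ (K *ᵥ e)) ⬝ᵥ (S *ᵥ ((A + B * K) *ᵥ x + B *ᵥ (K *ᵥ e)))
        - x ⬝ᵥ (S *ᵥ x)
        + (x - (A + B * K) *ᵥ x - B *ᵥ (K *ᵥ e)) ⬝ᵥ
            ((lamMax hbar • X + Y) *ᵥ (x - (A + B * K) *ᵥ x - B *ᵥ (K *ᵥ e)))
        + 2 * ((x - (A + B * K) *ᵥ x - B *ᵥ (K *ᵥ e)) ⬝ᵥ (Y *ᵥ e))
        - e ⬝ᵥ (X *ᵥ e) < 0) :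
    (∀ t : ℕ → ℕ, StrictMono t → t 0 = 0 → (∀ k : ℕ, t (k + 1) - t k ≤ hbar) →
      ∀ (x₀ : EuclideanSpace ℝ (Fin n)) (x : ℕ → EuclideanSpace ℝ (Fin n)),
        IsTraj A B K t x₀ x → Filter.Tendsto x Filter.atTop (nhds 0)) ∧
    (∀ ε : ℝ, 0 < ε → ∃ δ : ℝ, 0 < δ ∧
      ∀ t : ℕ → ℕ, StrictMono t → t 0 = 0 → (∀ k : ℕ, t (k + 1) - t k ≤ hbar) →
        ∀ (x₀ : EuclideanSpace ℝ (Fin n)) (x : ℕ → EuclideanSpace ℝ (Fin n)),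
          IsTraj A B K t x₀ x → ‖x₀‖ < δ → ∀ s : ℕ, ‖x s‖ < ε) :=
  model_based_stability_general n m A B K hbar S X Y hS hX hY hLMI
end

section
/- Let a, b ∈ ℝ with a ∈ (−1, 1), b ∈ (0, 2), and a + b ∈ (−1, 1). Then for every integer h̄ ≥ 1, every sampling sequence t : ℕ → ℕ with sampling intervals h_k ∈ {1,…,h̄}, and every x₀ ∈ ℝ, the scalar aperiodically sampled closed-loop trajectory defined by x(0) = x₀ and x(s+1) = a·x(s) + b·x(t(k)) for s ∈ {t(k),…,t(k+1)−1} satisfies x(s) → 0 as s → ∞; moreover, for every ε > 0 there is δ > 0 such that |x₀| < δ implies |x(s)| < ε for all s and all such sampling sequences. (Stability holds for arbitrary upper bounds h̄ on the sampling intervals.) -/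
lemma scalar_sampled_aux (a b r : ℝ) (hr : a * r + b = r) (hr0 : 0 ≤ r) (hr1 : r ≤ 1)
    (haa : |a| ≤ 1)
    (t : ℕ → ℕ) (ht : StrictMono t) (ht0 : t 0 = 0)
    (x : ℕ → ℝ)
    (hrec : ∀ k s : ℕ, t k ≤ s → s < t (k + 1) → x (s + 1) = a * x s + b * x (t k)) :
    ∀ s K : ℕ, t K ≤ s → |x s| ≤ (r + (1 - r) * |a|) ^ K * |x 0| := by
  set c := r + (1 - r) * |a| with hc
  have hc0 : 0 ≤ c := add_nonneg hr0 (mul_nonneg (by linarith) (abs_nonneg a))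
  have hc1 : c ≤ 1 := by nlinarith [abs_nonneg a]
  -- explicit formula within one sampling interval
  have form : ∀ k j : ℕ, t k + j ≤ t (k + 1) →
      x (t k + j) = (r + a ^ j * (1 - r)) * x (t k) := by
    intro k j
    induction j with
    | zero => intro _; simp
    | succ j ih =>
      intro hj
      have h1 : t k + j ≤ t (k + 1) := by omega
      have h2 : t k + j < t (k + 1) := by omega
      have h3 : t k ≤ t k + j := Nat.le_add_right _ _
      have := hrec k (t k + j) h3 h2
      rw [show t k + (j + 1) = (t k + j) + 1 by omega, this, ih h1]
      linear_combination (x (t k)) * hr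
  -- bound within an interval
  have inner : ∀ k j : ℕ, t k + j ≤ t (k + 1) → |x (t k + j)| ≤ |x (t k)| := by
    intro k j hj
    rw [form k j hj, abs_mul]
    have h1 : |r + a ^ j * (1 - r)| ≤ r + |a| ^ j * (1 - r) := by
      calc |r + a ^ j * (1 - r)| ≤ |r| + |a ^ j * (1 - r)| := abs_add_le _ _
        _ = r + |a| ^ j * (1 - r) := by
            rw [abs_of_nonneg hr0, abs_mul, abs_pow, abs_of_nonneg (by linarith : (0:ℝ) ≤ 1 - r)]
    have h2 : |a| ^ j ≤ 1 := pow_le_one₀ (abs_nonneg a) haa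
    have : |r + a ^ j * (1 - r)| ≤ 1 := by nlinarith
    nlinarith [abs_nonneg (x (t k))]
  -- contraction at sampling times
  have inner1 : ∀ k j : ℕ, 1 ≤ j → t k + j ≤ t (k + 1) → |x (t k + j)| ≤ c * |x (t k)| := by
    intro k j hj1 hj
    rw [form k j hj, abs_mul]
    have h1 : |r + a ^ j * (1 - r)| ≤ r + |a| ^ j * (1 - r) := by
      calc |r + a ^ j * (1 - r)| ≤ |r| + |a ^ j * (1 - r)| := abs_add_le _ _
        _ = r + |a| ^ j * (1 - r) := by
            rw [abs_of_nonneg hr0, abs_mul, abs_pow, abs_of_nonneg (by linarith : (0:ℝ) ≤ 1 - r)]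
    have h2 : |a| ^ j ≤ |a| := by
      calc |a| ^ j ≤ |a| ^ 1 := pow_le_pow_of_le_one (abs_nonneg a) haa hj1
        _ = |a| := pow_one _
    have : |r + a ^ j * (1 - r)| ≤ c := by nlinarith
    nlinarith [abs_nonneg (x (t k))]
  -- bound at sampling times
  have samp : ∀ k : ℕ, |x (t k)| ≤ c ^ k * |x 0| := by
    intro k
    induction k with
    | zero => simp [ht0]
    | succ k ih =>
      have hlt : t k < t (k + 1) := ht (Nat.lt_succ_self k)
      have hkey := inner1 k (t (k + 1) - t k) (by omega) (by omega)
      rw [show t k + (t (k + 1) - t k) = t (k + 1) by omega] at hkey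
      calc |x (t (k + 1))| ≤ c * |x (t k)| := hkey
        _ ≤ c * (c ^ k * |x 0|) := by nlinarith
        _ = c ^ (k + 1) * |x 0| := by ring
  intro s K hK
  -- find the interval containing s
  set k := Nat.findGreatest (fun m => t m ≤ s) s with hkdef
  have hKs : K ≤ s := le_trans ht.le_apply hK
  have hKk : K ≤ k := Nat.le_findGreatest (P := fun m => t m ≤ s) hKs hK
  have htk : t k ≤ s := Nat.findGreatest_spec (P := fun m => t m ≤ s) hKs hK
  have hs2 : s < t (k + 1) := by
    by_contra h
    push_neg at h
    have h1 : k + 1 ≤ t (k + 1) := ht.le_apply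
    have := Nat.le_findGreatest (P := fun m => t m ≤ s) (le_trans h1 h) h
    omega
  have h3 : |x s| ≤ |x (t k)| := by
    have := inner k (s - t k) (by omega)
    rwa [show t k + (s - t k) = s by omega] at this
  have h4 : c ^ k ≤ c ^ K := pow_le_pow_of_le_one hc0 hc1 hKk
  calc |x s| ≤ |x (t k)| := h3
    _ ≤ c ^ k * |x 0| := samp k
    _ ≤ c ^ K * |x 0| := by nlinarith [abs_nonneg (x 0)]
/-- Scalar example: for `a ∈ (−1,1)`, `b ∈ (0,2)`, `a + b ∈ (−1,1)`, the scalar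
aperiodically sampled closed loop `x(s+1) = a·x(s) + b·x(t k)` is asymptotically stable
for every upper bound `h̄` on the sampling intervals. -/
theorem scalar_stability_arbitrary_hbar
    (a b : ℝ) (ha : -1 < a ∧ a < 1) (hb : 0 < b ∧ b < 2)
    (hab : -1 < a + b ∧ a + b < 1) :
    ∀ hbar : ℕ, 1 ≤ hbar →
      (∀ t : ℕ → ℕ, StrictMono t → t 0 = 0 → (∀ k : ℕ, t (k + 1) - t k ≤ hbar) →
        ∀ (x₀ : ℝ) (x : ℕ → ℝ), x 0 = x₀ →
          (∀ k s : ℕ, t k ≤ s → s < t (k + 1) → x (s + 1) = a * x s + b * x (t k)) →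
          Filter.Tendsto x Filter.atTop (nhds 0)) ∧
      (∀ ε : ℝ, 0 < ε → ∃ δ : ℝ, 0 < δ ∧
        ∀ t : ℕ → ℕ, StrictMono t → t 0 = 0 → (∀ k : ℕ, t (k + 1) - t k ≤ hbar) →
          ∀ (x₀ : ℝ) (x : ℕ → ℝ), x 0 = x₀ →
            (∀ k s : ℕ, t k ≤ s → s < t (k + 1) → x (s + 1) = a * x s + b * x (t k)) →
            |x₀| < δ → ∀ s : ℕ, |x s| < ε) := by
  obtain ⟨ha1, ha2⟩ := ha
  obtain ⟨hb1, hb2⟩ := hb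
  obtain ⟨hab1, hab2⟩ := hab
  have h1a : (0:ℝ) < 1 - a := by linarith
  set r : ℝ := b / (1 - a) with hrdef
  have hr : a * r + b = r := by rw [hrdef]; field_simp; ring
  have hr0 : 0 ≤ r := le_of_lt (div_pos hb1 h1a)
  have hr1' : r < 1 := (div_lt_one h1a).mpr (by linarith)
  have hr1 : r ≤ 1 := le_of_lt hr1'
  have haabs : |a| < 1 := abs_lt.mpr ⟨ha1, ha2⟩
  have haa : |a| ≤ 1 := le_of_lt haabs
  set c : ℝ := r + (1 - r) * |a| with hcdef
  have hc0 : 0 ≤ c := add_nonneg hr0 (mul_nonneg (by linarith) (abs_nonneg a))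
  have hc1 : c < 1 := by nlinarith [abs_nonneg a]
  intro hbar _
  constructor
  · intro t ht ht0 _ x₀ x hx0 hrec
    have aux := scalar_sampled_aux a b r hr hr0 hr1 haa t ht ht0 x hrec
    rw [Metric.tendsto_atTop]
    intro ε hε
    have hx0nn : (0:ℝ) ≤ |x 0| := abs_nonneg _
    obtain ⟨K, hK⟩ : ∃ K : ℕ, c ^ K * |x 0| < ε := by
      have hε' : 0 < ε / (|x 0| + 1) := div_pos hε (by linarith)
      obtain ⟨K, hK⟩ := exists_pow_lt_of_lt_one hε' hc1
      refine ⟨K, ?_⟩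
      have h2 : c ^ K * |x 0| ≤ (ε / (|x 0| + 1)) * |x 0| := by nlinarith [pow_nonneg hc0 K]
      have h3 : (ε / (|x 0| + 1)) * |x 0| < (ε / (|x 0| + 1)) * (|x 0| + 1) := by nlinarith
      have h4 : (ε / (|x 0| + 1)) * (|x 0| + 1) = ε := by field_simp
      linarith
    refine ⟨t K, fun s hs => ?_⟩
    rw [Real.dist_eq, sub_zero]
    exact lt_of_le_of_lt (aux s K hs) hK
  · intro ε hε
    refine ⟨ε, hε, fun t ht ht0 _ x₀ x hx0 hrec hx₀ s => ?_⟩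
    have aux := scalar_sampled_aux a b r hr hr0 hr1 haa t ht ht0 x hrec
    have := aux s 0 (by rw [ht0]; exact Nat.zero_le s)
    rw [pow_zero, one_mul] at this
    rw [hx0] at this
    linarith
end

section
/- Let b ∈ ℝ, c ∈ (−1, 1), λ > 0, and Y ≥ 0, and define G : ℂ → ℂ by G(z) = b·(1 − z)/(z − c) (well defined for |z| = 1 since |c| < 1). Then the following are equivalent: (i) for all ω ∈ ℝ, (λ + Y)·|G(e^{iω})|² + 2·Y·Re(G(e^{iω})) ≤ 0; (ii) (λ + Y)·b² ≤ Y·b·(1 + c). -/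
/-!
On the unit circle `|1 - z|² = 2(1 - Re z)` and `Re((1 - z)(z̄ - c)) = -(1 + c)(1 - Re z)`, so
`(λ + Y)|G(z)|² + 2Y Re G(z) = |1 - z|²/|z - c|² · ((λ + Y)b² - Yb(1 + c))`.
The factor `|1 - z|²/|z - c|²` is nonnegative, and positive at `z = -1`.
-/

open Complex ComplexConjugate

namespace Complex

lemma div_re_eq_re_mul_conj_div (w v : ℂ) : (w / v).re = (w * conj v).re / ‖v‖ ^ 2 := by
  rw [div_re, mul_re, conj_re, conj_im, ← normSq_eq_norm_sq]
  ring

lemma re_one_sub_mul_conj_sub_ofReal {z : ℂ} (hz : ‖z‖ = 1) (c : ℝ) :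
    ((1 - z) * conj (z - c)).re = -((1 + c) / 2 * ‖1 - z‖ ^ 2) := by
  have hunit : z.re * z.re + z.im * z.im = 1 := by
    rw [← normSq_apply, normSq_eq_norm_sq, hz, one_pow]
  rw [← normSq_eq_norm_sq, normSq_apply]
  simp only [mul_re, sub_re, sub_im, one_re, one_im, conj_re, conj_im, ofReal_re, ofReal_im]
  linear_combination (c - 1) / 2 * hunit

end Complex

/-- At `z = c` both sides are `0`, since `x / 0 = 0`. -/
lemma frequency_form_eq_of_norm_eq_one {z : ℂ} (hz : ‖z‖ = 1) (b c lam Y : ℝ) :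
    (lam + Y) * ‖(b : ℂ) * (1 - z) / (z - c)‖ ^ 2 + 2 * Y * ((b : ℂ) * (1 - z) / (z - c)).re
      = ‖1 - z‖ ^ 2 / ‖z - c‖ ^ 2 * ((lam + Y) * b ^ 2 - Y * b * (1 + c)) := by
  rw [div_re_eq_re_mul_conj_div, mul_assoc (b : ℂ), re_ofReal_mul,
    re_one_sub_mul_conj_sub_ofReal hz, norm_div, norm_mul, norm_real, Real.norm_eq_abs, div_pow,
    mul_pow, sq_abs]
  ring

theorem scalar_frequency_domain_equivalence_general
    (b c lam Y : ℝ) (hc : -1 < c ∧ c < 1)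
    (G : ℂ → ℂ) (hG : ∀ z : ℂ, G z = (b : ℂ) * (1 - z) / (z - (c : ℂ))) :
    (∀ ω : ℝ,
        (lam + Y) * ‖G (Complex.exp (Complex.I * ω))‖ ^ 2
          + 2 * Y * (G (Complex.exp (Complex.I * ω))).re ≤ 0) ↔
      (lam + Y) * b ^ 2 ≤ Y * b * (1 + c) := by
  have hform (ω : ℝ) := frequency_form_eq_of_norm_eq_one (z := exp (I * ω))
    (by rw [mul_comm]; exact norm_exp_ofReal_mul_I ω) b c lam Y
  simp only [hG, hform]
  constructor
  · intro h
    have hπ := h Real.pi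
    rw [mul_comm I, exp_pi_mul_I] at hπ
    have hc_ne : -1 - (c : ℂ) ≠ 0 := by
      rw [← ofReal_one, ← ofReal_neg, ← ofReal_sub, ofReal_ne_zero]
      linarith [hc.1]
    have hfactor : 0 < ‖1 - (-1 : ℂ)‖ ^ 2 / ‖-1 - (c : ℂ)‖ ^ 2 := by
      norm_num
      positivity
    exact sub_nonpos.mp (nonpos_of_mul_nonpos_right hπ hfactor)
  · intro h ω
    exact mul_nonpos_of_nonneg_of_nonpos (by positivity) (sub_nonpos.mpr h)

/-- For the scalar transfer function `G(z) = b(1 − z)/(z − c)` with `|c| < 1`, `λ > 0`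
and `Y ≥ 0`, the frequency-domain inequality
`(λ + Y)|G(e^{iω})|² + 2·Y·Re G(e^{iω}) ≤ 0` for all `ω ∈ ℝ` is equivalent to
`(λ + Y)·b² ≤ Y·b·(1 + c)`. -/
theorem scalar_frequency_domain_equivalence
    (b c lam Y : ℝ) (hc : -1 < c ∧ c < 1) (hlam : 0 < lam) (hY : 0 ≤ Y)
    (G : ℂ → ℂ) (hG : ∀ z : ℂ, G z = (b : ℂ) * (1 - z) / (z - (c : ℂ))) :
    (∀ ω : ℝ,
        (lam + Y) * ‖G (Complex.exp (Complex.I * ω))‖ ^ 2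
          + 2 * Y * (G (Complex.exp (Complex.I * ω))).re ≤ 0) ↔
      (lam + Y) * b ^ 2 ≤ Y * b * (1 + c) :=
  scalar_frequency_domain_equivalence_general b c lam Y hc G hG
end
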